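/- arXiv:2111.12611 — 11 statements merged into one kernel-verified Lean document; each statement's English description precedes it below -/
import Mathlib

section
/- Let d ≥ 2, let a, γ > 0 and b ≥ 0. Then the polynomial equation x = γ(x-a)(x+b)^{d-1} has exactly two real solutions if d is even, and exactly three real solutions if d is odd. -/
lemma uniq_aux (e : ℕ) (he : e ≠ 0) (a γ b x y : ℝ) (ha : 0 < a) (hγ : 0 < γ)
    (hxy : x < y) (hxb : 0 < x + b) (hsign : 0 < (x - a) * y)
    (hx : x = γ * (x - a) * (x + b) ^ e) (hy : y = γ * (y - a) * (y + b) ^ e) : False := by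
  have hP : 0 < (x + b) ^ e := pow_pos hxb e
  have hPQ : (x + b) ^ e < (y + b) ^ e := pow_lt_pow_left₀ (by linarith) hxb.le he
  have h1 : (x - a) * y < (y - a) * x := by nlinarith
  have h2 : 0 < (y - a) * x := lt_trans hsign h1
  have e1 : x * y = γ * ((x - a) * y) * ((x + b) ^ e) := by
    conv_lhs => rw [hx]
    ring
  have e2 : y * x = γ * ((y - a) * x) * ((y + b) ^ e) := by
    conv_lhs => rw [hy]
    ring
  nlinarith [mul_lt_mul_of_pos_right h1 (mul_pos hγ hP),
    mul_lt_mul_of_pos_left hPQ (mul_pos hγ h2)]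

lemma exist_pos (e : ℕ) (he : e ≠ 0) (a γ b : ℝ) (ha : 0 < a) (hγ : 0 < γ) (hb : 0 ≤ b) :
    ∃ x, a < x ∧ x = γ * (x - a) * (x + b) ^ e := by
  set M : ℝ := a + 1 + 1/γ with hM
  have hγ' : 0 < 1/γ := by positivity
  have hc : ContinuousOn (fun x : ℝ => γ * (x - a) * (x + b) ^ e - x) (Set.Icc a M) := by
    fun_prop
  have haM : a ≤ M := by simp only [hM]; linarith
  have hM1 : 1 ≤ M + b := by simp only [hM]; linarith
  have hMb : M + b ≤ (M + b) ^ e := le_self_pow₀ hM1 he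
  have hMa : 0 < γ * (M - a) := by
    have : M - a = 1 + 1/γ := by simp only [hM]; ring
    rw [this]; positivity
  have hFM : 0 < γ * (M - a) * (M + b) ^ e - M := by
    have h3 : γ * (M - a) * (M + b) ≤ γ * (M - a) * (M + b) ^ e := by nlinarith
    have hg : γ * (M - a) = γ + 1 := by
      have : M - a = 1 + 1/γ := by simp only [hM]; ring
      rw [this]; field_simp
    nlinarith
  have hFa : γ * (a - a) * (a + b) ^ e - a < 0 := by simp; positivity
  obtain ⟨x, hx1, hx2⟩ := intermediate_value_Ioo haM hc (Set.mem_Ioo.mpr ⟨hFa, hFM⟩)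
  simp only at hx2
  exact ⟨x, hx1.1, by linarith⟩

lemma exist_mid (e : ℕ) (he : e ≠ 0) (a γ b : ℝ) (ha : 0 < a) (hγ : 0 < γ) (hb : 0 < b) :
    ∃ x, x ∈ Set.Ioo (-b) 0 ∧ x = γ * (x - a) * (x + b) ^ e := by
  have hc : ContinuousOn (fun x : ℝ => γ * (x - a) * (x + b) ^ e - x) (Set.Icc (-b) 0) := by
    fun_prop
  have h1 : γ * ((-b) - a) * ((-b) + b) ^ e - (-b) = b := by
    rw [show (-b) + b = 0 by ring, zero_pow he]; ring
  have hm1 : γ * ((0:ℝ) - a) * ((0:ℝ) + b) ^ e - 0 < 0 := by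
    rw [zero_add]
    have : 0 < γ * a * b ^ e := by positivity
    nlinarith
  have hm2 : (0:ℝ) < γ * ((-b) - a) * ((-b) + b) ^ e - (-b) := by rw [h1]; exact hb
  have hmem : (0:ℝ) ∈ Set.Ioo (γ * ((0:ℝ) - a) * ((0:ℝ) + b) ^ e - 0)
      (γ * ((-b) - a) * ((-b) + b) ^ e - (-b)) := Set.mem_Ioo.mpr ⟨hm1, hm2⟩
  obtain ⟨x, hx1, hx2⟩ := intermediate_value_Ioo' (by linarith : -b ≤ (0:ℝ)) hc hmem
  simp only at hx2
  exact ⟨x, hx1, by linarith⟩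

lemma exist_neg (e : ℕ) (he : Even e) (he2 : 2 ≤ e) (a γ b : ℝ)
    (ha : 0 < a) (hγ : 0 < γ) (hb : 0 ≤ b) :
    ∃ x, x < -b ∧ x = γ * (x - a) * (x + b) ^ e := by
  have he0 : e ≠ 0 := by omega
  have key : ∀ t : ℝ, γ * ((-b - t) - a) * ((-b - t) + b) ^ e - (-b - t)
      = b + t - γ * (a + b + t) * t ^ e := by
    intro t
    rw [show (-b - t) + b = -t by ring, he.neg_pow]
    ring
  set t₀ : ℝ := min 1 (1 / (2 * γ * (a + b + 1))) with ht₀def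
  set t₁ : ℝ := max 2 ((b + 2) / γ) with ht₁def
  have ht₀pos : 0 < t₀ := lt_min one_pos (by positivity)
  have ht₀le1 : t₀ ≤ 1 := min_le_left _ _
  have ht₀le : t₀ ≤ 1 / (2 * γ * (a + b + 1)) := min_le_right _ _
  have ht₁ge2 : 2 ≤ t₁ := le_max_left _ _
  have ht₁ge : (b + 2) / γ ≤ t₁ := le_max_right _ _
  have ht01 : t₀ < t₁ := by linarith
  have hpos : 0 < b + t₀ - γ * (a + b + t₀) * t₀ ^ e := by
    have hp2 : t₀ ^ e ≤ t₀ ^ 2 := pow_le_pow_of_le_one ht₀pos.le ht₀le1 he2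
    have hγt : γ * (a + b + 1) * t₀ ≤ 1 / 2 := by
      rw [le_div_iff₀ (by positivity : (0:ℝ) < 2 * γ * (a + b + 1))] at ht₀le
      nlinarith
    have hmm : (a + b + t₀) * t₀ ^ e ≤ (a + b + 1) * t₀ ^ 2 :=
      mul_le_mul (by linarith) hp2 (by positivity) (by linarith)
    have h5 : γ * ((a + b + t₀) * t₀ ^ e) ≤ γ * ((a + b + 1) * t₀ ^ 2) :=
      mul_le_mul_of_nonneg_left hmm hγ.le
    nlinarith [mul_le_mul_of_nonneg_right hγt ht₀pos.le, sq_nonneg t₀]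
  have hneg : b + t₁ - γ * (a + b + t₁) * t₁ ^ e < 0 := by
    have h1 : t₁ ≤ t₁ ^ e := le_self_pow₀ (by linarith) he0
    have h2 : b + 2 ≤ γ * t₁ := by
      rw [div_le_iff₀ hγ] at ht₁ge; linarith
    have hmm : t₁ * t₁ ≤ (a + b + t₁) * t₁ ^ e :=
      mul_le_mul (by linarith) h1 (by linarith) (by linarith)
    have h5 : γ * (t₁ * t₁) ≤ γ * ((a + b + t₁) * t₁ ^ e) :=
      mul_le_mul_of_nonneg_left hmm hγ.le
    nlinarith [mul_le_mul_of_nonneg_right h2 (by linarith : (0:ℝ) ≤ t₁)]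
  have hc : ContinuousOn (fun x : ℝ => γ * (x - a) * (x + b) ^ e - x)
      (Set.Icc (-b - t₁) (-b - t₀)) := by fun_prop
  have hm1 : γ * ((-b - t₁) - a) * ((-b - t₁) + b) ^ e - (-b - t₁) < 0 := by
    rw [key t₁]; linarith
  have hm2 : (0:ℝ) < γ * ((-b - t₀) - a) * ((-b - t₀) + b) ^ e - (-b - t₀) := by
    rw [key t₀]; linarith
  have hmem : (0:ℝ) ∈ Set.Ioo (γ * ((-b - t₁) - a) * ((-b - t₁) + b) ^ e - (-b - t₁))
      (γ * ((-b - t₀) - a) * ((-b - t₀) + b) ^ e - (-b - t₀)) := Set.mem_Ioo.mpr ⟨hm1, hm2⟩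
  obtain ⟨x, hx1, hx2⟩ := intermediate_value_Ioo (by linarith : -b - t₁ ≤ -b - t₀) hc hmem
  simp only at hx2
  exact ⟨x, by have := hx1.2; linarith, by linarith⟩

lemma uniq_neg (e : ℕ) (he2 : 2 ≤ e) (a γ b s t : ℝ) (ha : 0 < a) (hγ : 0 < γ) (hb : 0 ≤ b)
    (ht : 0 < t) (hst : t < s)
    (hs : b + s = γ * (a + b + s) * s ^ e) (htq : b + t = γ * (a + b + t) * t ^ e) : False := by
  have hs0 : 0 < s := lt_trans ht hst
  have hee : e - 1 + 1 = e := by omega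
  have hsE : s ^ e = s ^ (e - 1) * s := by rw [← pow_succ, hee]
  have htE : t ^ e = t ^ (e - 1) * t := by rw [← pow_succ, hee]
  have hp : t ^ (e - 1) < s ^ (e - 1) := pow_lt_pow_left₀ hst ht.le (by omega)
  have hp0 : 0 < t ^ (e - 1) := pow_pos ht _
  have hmm : (a + b + t) * t ^ (e - 1) < (a + b + s) * s ^ (e - 1) :=
    mul_lt_mul (by linarith) hp.le hp0 (by linarith)
  have hA : γ * ((a + b + t) * t ^ (e - 1)) < γ * ((a + b + s) * s ^ (e - 1)) :=
    mul_lt_mul_of_pos_left hmm hγ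
  have hB : γ * ((a + b + t) * t ^ (e - 1)) * (s * t) < γ * ((a + b + s) * s ^ (e - 1)) * (s * t) :=
    mul_lt_mul_of_pos_right hA (by positivity)
  have e1 : (b + s) * t = γ * ((a + b + s) * s ^ (e - 1)) * (s * t) := by rw [hs, hsE]; ring
  have e2 : (b + t) * s = γ * ((a + b + t) * t ^ (e - 1)) * (s * t) := by rw [htq, htE]; ring
  nlinarith [mul_nonneg hb (by linarith : (0:ℝ) ≤ s - t)]

lemma uniq_pos (e : ℕ) (he : e ≠ 0) (a γ b x y : ℝ) (ha : 0 < a) (hγ : 0 < γ) (hb : 0 ≤ b)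
    (hx : a < x) (hy : a < y)
    (hex : x = γ * (x - a) * (x + b) ^ e) (hey : y = γ * (y - a) * (y + b) ^ e) : x = y := by
  rcases lt_trichotomy x y with h | h | h
  · exact absurd (uniq_aux e he a γ b x y ha hγ h (by linarith)
      (mul_pos (by linarith) (by linarith)) hex hey) (by simp)
  · exact h
  · exact absurd (uniq_aux e he a γ b y x ha hγ h (by linarith)
      (mul_pos (by linarith) (by linarith)) hey hex) (by simp)

lemma uniq_mid (e : ℕ) (he : e ≠ 0) (a γ b x y : ℝ) (ha : 0 < a) (hγ : 0 < γ)
    (hxm : -b < x) (hx0 : x < 0) (hym : -b < y) (hy0 : y < 0)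
    (hex : x = γ * (x - a) * (x + b) ^ e) (hey : y = γ * (y - a) * (y + b) ^ e) : x = y := by
  rcases lt_trichotomy x y with h | h | h
  · exact absurd (uniq_aux e he a γ b x y ha hγ h (by linarith)
      (mul_pos_of_neg_of_neg (by linarith) hy0) hex hey) (by simp)
  · exact h
  · exact absurd (uniq_aux e he a γ b y x ha hγ h (by linarith)
      (mul_pos_of_neg_of_neg (by linarith) hx0) hey hex) (by simp)

lemma uniq_neg' (e : ℕ) (he : Even e) (he2 : 2 ≤ e) (a γ b x y : ℝ)
    (ha : 0 < a) (hγ : 0 < γ) (hb : 0 ≤ b) (hx : x < -b) (hy : y < -b)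
    (hex : x = γ * (x - a) * (x + b) ^ e) (hey : y = γ * (y - a) * (y + b) ^ e) : x = y := by
  have conv : ∀ z : ℝ, z = γ * (z - a) * (z + b) ^ e →
      b + (-(z + b)) = γ * (a + b + (-(z + b))) * (-(z + b)) ^ e := by
    intro z h
    rw [Even.neg_pow he]
    linear_combination -h
  rcases lt_trichotomy x y with h | h | h
  · exact absurd (uniq_neg e he2 a γ b (-(x + b)) (-(y + b)) ha hγ hb (by linarith)
      (by linarith) (conv x hex) (conv y hey)) (by simp)
  · exact h
  · exact absurd (uniq_neg e he2 a γ b (-(y + b)) (-(x + b)) ha hγ hb (by linarith)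
      (by linarith) (conv y hey) (conv x hex)) (by simp)

theorem root_count (d : ℕ) (hd : 2 ≤ d) (a γ b : ℝ) (ha : 0 < a) (hγ : 0 < γ) (hb : 0 ≤ b) :
    (Even d → {x : ℝ | x = γ * (x - a) * (x + b) ^ (d - 1)}.ncard = 2) ∧
    (Odd d → {x : ℝ | x = γ * (x - a) * (x + b) ^ (d - 1)}.ncard = 3) := by
  set e := d - 1 with hedef
  have he0 : e ≠ 0 := by omega
  obtain ⟨p, hpa, hpe⟩ := exist_pos e he0 a γ b ha hγ hb
  have hp0 : 0 < p := lt_trans ha hpa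
  constructor
  · -- Even d
    intro hdeven
    have heodd : Odd e := Nat.Even.sub_odd (by omega) hdeven odd_one
    rcases eq_or_lt_of_le hb with hb0 | hbpos
    · -- b = 0
      have hb0 : b = 0 := hb0.symm
      subst hb0
      have hset : {x : ℝ | x = γ * (x - a) * (x + 0) ^ e} = {0, p} := by
        ext x
        simp only [Set.mem_setOf_eq, Set.mem_insert_iff, Set.mem_singleton_iff]
        constructor
        · intro hx
          rcases lt_trichotomy x 0 with h | h | h
          · exfalso
            have h1 : x ^ e < 0 := heodd.pow_neg h
            have h2 : 0 < γ * (x - a) * (x + 0) ^ e := by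
              rw [add_zero]
              exact mul_pos_of_neg_of_neg (mul_neg_of_pos_of_neg hγ (by linarith)) h1
            linarith
          · exact Or.inl h
          · right
            rcases le_or_gt x a with hxa | hxa
            · exfalso
              have h1 : 0 < x ^ e := pow_pos h e
              have h2 : γ * (x - a) * (x + 0) ^ e ≤ 0 := by
                rw [add_zero]
                exact mul_nonpos_of_nonpos_of_nonneg
                  (mul_nonpos_of_nonneg_of_nonpos hγ.le (by linarith)) h1.le
              linarith
            · exact uniq_pos e he0 a γ 0 x p ha hγ le_rfl hxa hpa hx hpe
        · rintro (rfl | rfl)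
          · rw [add_zero, zero_pow he0]; ring
          · exact hpe
      rw [hset]
      exact Set.ncard_pair (by linarith)
    · -- 0 < b
      obtain ⟨m, ⟨hmb, hm0⟩, hme⟩ := exist_mid e he0 a γ b ha hγ hbpos
      have hset : {x : ℝ | x = γ * (x - a) * (x + b) ^ e} = {m, p} := by
        ext x
        simp only [Set.mem_setOf_eq, Set.mem_insert_iff, Set.mem_singleton_iff]
        constructor
        · intro hx
          rcases le_or_gt x (-b) with h | h
          · exfalso
            have h1 : (x + b) ^ e ≤ 0 := heodd.pow_nonpos (by linarith)
            have h2 : 0 ≤ γ * (x - a) * (x + b) ^ e :=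
              mul_nonneg_of_nonpos_of_nonpos (mul_nonpos_of_nonneg_of_nonpos hγ.le
                (by linarith)) h1
            linarith
          · rcases lt_trichotomy x 0 with h0 | h0 | h0
            · exact Or.inl (uniq_mid e he0 a γ b x m ha hγ h h0 hmb hm0 hx hme)
            · exfalso
              subst h0
              have : 0 < γ * a * b ^ e := by positivity
              rw [zero_add] at hx
              nlinarith
            · right
              rcases le_or_gt x a with hxa | hxa
              · exfalso
                have h1 : 0 < (x + b) ^ e := pow_pos (by linarith) e
                have h2 : γ * (x - a) * (x + b) ^ e ≤ 0 :=
                  mul_nonpos_of_nonpos_of_nonneg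
                    (mul_nonpos_of_nonneg_of_nonpos hγ.le (by linarith)) h1.le
                linarith
              · exact uniq_pos e he0 a γ b x p ha hγ hb hxa hpa hx hpe
        · rintro (rfl | rfl)
          · exact hme
          · exact hpe
      rw [hset]
      exact Set.ncard_pair (by linarith)
  · -- Odd d
    intro hdodd
    have hd3 : 3 ≤ d := by
      have := Nat.odd_iff.mp hdodd; omega
    have he2 : 2 ≤ e := by omega
    have heeven : Even e := Nat.Odd.sub_odd hdodd odd_one
    obtain ⟨n, hnb, hne⟩ := exist_neg e heeven he2 a γ b ha hγ hb
    rcases eq_or_lt_of_le hb with hb0 | hbpos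
    · -- b = 0
      have hb0 : b = 0 := hb0.symm
      subst hb0
      have hn0 : n < 0 := by linarith [hnb]
      have hset : {x : ℝ | x = γ * (x - a) * (x + 0) ^ e} = {n, 0, p} := by
        ext x
        simp only [Set.mem_setOf_eq, Set.mem_insert_iff, Set.mem_singleton_iff]
        constructor
        · intro hx
          rcases lt_trichotomy x 0 with h | h | h
          · exact Or.inl (uniq_neg' e heeven he2 a γ 0 x n ha hγ le_rfl
              (by linarith) hnb hx hne)
          · exact Or.inr (Or.inl h)
          · right; right
            rcases le_or_gt x a with hxa | hxa
            · exfalso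
              have h1 : 0 < x ^ e := pow_pos h e
              have h2 : γ * (x - a) * (x + 0) ^ e ≤ 0 := by
                rw [add_zero]
                exact mul_nonpos_of_nonpos_of_nonneg
                  (mul_nonpos_of_nonneg_of_nonpos hγ.le (by linarith)) h1.le
              linarith
            · exact uniq_pos e he0 a γ 0 x p ha hγ le_rfl hxa hpa hx hpe
        · rintro (rfl | rfl | rfl)
          · exact hne
          · rw [add_zero, zero_pow he0]; ring
          · exact hpe
      rw [hset]
      rw [Set.ncard_eq_three]
      exact ⟨n, 0, p, by linarith, by linarith, by linarith, rfl⟩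
    · -- 0 < b
      obtain ⟨m, ⟨hmb, hm0⟩, hme⟩ := exist_mid e he0 a γ b ha hγ hbpos
      have hset : {x : ℝ | x = γ * (x - a) * (x + b) ^ e} = {n, m, p} := by
        ext x
        simp only [Set.mem_setOf_eq, Set.mem_insert_iff, Set.mem_singleton_iff]
        constructor
        · intro hx
          rcases lt_trichotomy x (-b) with h | h | h
          · exact Or.inl (uniq_neg' e heeven he2 a γ b x n ha hγ hb h hnb hx hne)
          · exfalso
            subst h
            rw [show -b + b = 0 by ring, zero_pow he0] at hx
            nlinarith
          · rcases lt_trichotomy x 0 with h0 | h0 | h0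
            · exact Or.inr (Or.inl (uniq_mid e he0 a γ b x m ha hγ h h0 hmb hm0 hx hme))
            · exfalso
              subst h0
              have : 0 < γ * a * b ^ e := by positivity
              rw [zero_add] at hx
              nlinarith
            · right; right
              rcases le_or_gt x a with hxa | hxa
              · exfalso
                have h1 : 0 < (x + b) ^ e := pow_pos (by linarith) e
                have h2 : γ * (x - a) * (x + b) ^ e ≤ 0 :=
                  mul_nonpos_of_nonpos_of_nonneg
                    (mul_nonpos_of_nonneg_of_nonpos hγ.le (by linarith)) h1.le
                linarith
              · exact uniq_pos e he0 a γ b x p ha hγ hb hxa hpa hx hpe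
        · rintro (rfl | rfl | rfl)
          · exact hne
          · exact hme
          · exact hpe
      rw [hset]
      rw [Set.ncard_eq_three]
      exact ⟨n, m, p, by linarith, by linarith, by linarith, rfl⟩
end

section
/- Let f : [a,b] → ℝ be convex and continuously differentiable, and suppose a < a' < b' < b with a + b = a' + b'. Then (1/(b-a))∫_a^b f(x) dx ≥ (1/(b'-a'))∫_{a'}^{b'} f(x) dx ≥ f((a+b)/2). If f is strictly convex, the inequalities are strict. -/
/-!
With `m` the common midpoint, the average of `f` over `[m - R, m + R]` is
`∫ t in 0..1, φ (R * t)`, where `φ s = (f (m + s) + f (m - s)) / 2` is the even part of `f`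
about `m`. For `|u| ≤ |v|` the points `m ± u` are the two convex combinations of `m ± v` with
swapped weights, so convexity gives `φ u ≤ φ v`, strictly for strictly convex `f` when
`|u| < |v|`. Comparing integrands for the radii `0 < r < R` gives both inequalities.
-/

open Set intervalIntegral
open MeasureTheory (volume)

section Swap

variable {𝕜 E β : Type*} [Ring 𝕜] [PartialOrder 𝕜] [IsOrderedRing 𝕜] [AddCommMonoid E]
  [Module 𝕜 E] [AddCommMonoid β] [PartialOrder β] [Module 𝕜 β]
  {s : Set E} {f : E → β} {x y : E} {θ : 𝕜}

theorem ConvexOn.map_add_map_swap_le [IsOrderedAddMonoid β] (hf : ConvexOn 𝕜 s f)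
    (hx : x ∈ s) (hy : y ∈ s) (hθ₀ : 0 ≤ θ) (hθ₁ : θ ≤ 1) :
    f (θ • x + (1 - θ) • y) + f ((1 - θ) • x + θ • y) ≤ f x + f y :=
  calc f (θ • x + (1 - θ) • y) + f ((1 - θ) • x + θ • y)
      ≤ (θ • f x + (1 - θ) • f y) + ((1 - θ) • f x + θ • f y) :=
        add_le_add (hf.2 hx hy hθ₀ (sub_nonneg.2 hθ₁) (add_sub_cancel θ 1))
          (hf.2 hx hy (sub_nonneg.2 hθ₁) hθ₀ (sub_add_cancel 1 θ))
    _ = f x + f y := by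
        rw [add_add_add_comm, ← add_smul, add_comm (_ • f y), ← add_smul, add_sub_cancel,
          one_smul, one_smul]

theorem StrictConvexOn.map_add_map_swap_lt [IsOrderedCancelAddMonoid β]
    (hf : StrictConvexOn 𝕜 s f) (hx : x ∈ s) (hy : y ∈ s) (hxy : x ≠ y) (hθ₀ : 0 < θ)
    (hθ₁ : θ < 1) :
    f (θ • x + (1 - θ) • y) + f ((1 - θ) • x + θ • y) < f x + f y :=
  calc f (θ • x + (1 - θ) • y) + f ((1 - θ) • x + θ • y)
      < (θ • f x + (1 - θ) • f y) + ((1 - θ) • f x + θ • f y) :=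
        add_lt_add (hf.2 hx hy hxy hθ₀ (sub_pos.2 hθ₁) (add_sub_cancel θ 1))
          (hf.2 hx hy hxy (sub_pos.2 hθ₁) hθ₀ (sub_add_cancel 1 θ))
    _ = f x + f y := by
        rw [add_add_add_comm, ← add_smul, add_comm (_ • f y), ← add_smul, add_sub_cancel,
          one_smul, one_smul]

end Swap

noncomputable def symmPart (f : ℝ → ℝ) (m s : ℝ) : ℝ := (f (m + s) + f (m - s)) / 2

section Real

variable {f : ℝ → ℝ} {s : Set ℝ} {m u v c C R : ℝ}

theorem mid_add_sub_eq_convexComb (hv : v ≠ 0) :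
    m + u = ((1 + u / v) / 2) • (m + v) + (1 - (1 + u / v) / 2) • (m - v) ∧
      m - u = (1 - (1 + u / v) / 2) • (m + v) + ((1 + u / v) / 2) • (m - v) := by
  simp only [smul_eq_mul]
  constructor <;> field_simp <;> ring

theorem ConvexOn.symmPart_le (hf : ConvexOn ℝ s f) (hvs : m + v ∈ s) (hvs' : m - v ∈ s)
    (huv : |u| ≤ |v|) : symmPart f m u ≤ symmPart f m v := by
  rcases eq_or_ne v 0 with rfl | hv
  · rw [abs_zero, abs_nonpos_iff] at huv
    rw [huv]
  have hθ : |u / v| ≤ 1 := by rwa [abs_div, div_le_one (abs_pos.2 hv)]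
  obtain ⟨hθ₀, hθ₁⟩ := abs_le.1 hθ
  obtain ⟨hu, hu'⟩ := mid_add_sub_eq_convexComb (m := m) (u := u) hv
  have := hf.map_add_map_swap_le hvs hvs' (θ := (1 + u / v) / 2) (by linarith) (by linarith)
  rw [symmPart, symmPart, hu, hu']
  linarith

theorem StrictConvexOn.symmPart_lt (hf : StrictConvexOn ℝ s f) (hvs : m + v ∈ s)
    (hvs' : m - v ∈ s) (huv : |u| < |v|) : symmPart f m u < symmPart f m v := by
  have hv : v ≠ 0 := abs_pos.1 ((abs_nonneg u).trans_lt huv)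
  have hθ : |u / v| < 1 := by rwa [abs_div, div_lt_one (abs_pos.2 hv)]
  obtain ⟨hθ₀, hθ₁⟩ := abs_lt.1 hθ
  obtain ⟨hu, hu'⟩ := mid_add_sub_eq_convexComb (m := m) (u := u) hv
  have := hf.map_add_map_swap_lt hvs hvs' (fun h ↦ hv (by linarith)) (θ := (1 + u / v) / 2)
    (by linarith) (by linarith)
  rw [symmPart, symmPart, hu, hu']
  linarith

theorem add_mem_Icc_of_abs_le (hv : |v| ≤ R) : m + v ∈ Icc (m - R) (m + R) :=
  mem_Icc_iff_abs_le.1 <| by rwa [sub_add_cancel_left, abs_neg]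

theorem sub_mem_Icc_of_abs_le (hv : |v| ≤ R) : m - v ∈ Icc (m - R) (m + R) :=
  mem_Icc_iff_abs_le.1 <| by rwa [sub_sub_cancel]

theorem abs_mul_le_of_mem_Icc {t : ℝ} (ht : t ∈ Icc (0 : ℝ) 1) (hc : |c| ≤ R) :
    |c * t| ≤ R := by
  rw [abs_mul]
  exact (mul_le_of_le_one_right (abs_nonneg c) (abs_le.2 ⟨by linarith [ht.1], ht.2⟩)).trans hc

theorem ContinuousOn.comp_mid_add_mul (hf : ContinuousOn f (Icc (m - R) (m + R)))
    (hc : |c| ≤ R) : ContinuousOn (fun t ↦ f (m + c * t)) (Icc 0 1) :=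
  hf.comp (by fun_prop) fun _ ht ↦ add_mem_Icc_of_abs_le (abs_mul_le_of_mem_Icc ht hc)

theorem ContinuousOn.comp_mid_sub_mul (hf : ContinuousOn f (Icc (m - R) (m + R)))
    (hc : |c| ≤ R) : ContinuousOn (fun t ↦ f (m - c * t)) (Icc 0 1) :=
  hf.comp (by fun_prop) fun _ ht ↦ sub_mem_Icc_of_abs_le (abs_mul_le_of_mem_Icc ht hc)

theorem ContinuousOn.symmPart_comp_mul (hf : ContinuousOn f (Icc (m - R) (m + R)))
    (hc : |c| ≤ R) : ContinuousOn (fun t ↦ symmPart f m (c * t)) (Icc 0 1) :=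
  ((hf.comp_mid_add_mul hc).add (hf.comp_mid_sub_mul hc)).div_const 2

theorem average_eq_integral_symmPart (hR : 0 < R) (hf : ContinuousOn f (Icc (m - R) (m + R))) :
    1 / (2 * R) * ∫ x in m - R..m + R, f x = ∫ t in (0 : ℝ)..1, symmPart f m (R * t) := by
  have hRR : |R| ≤ R := (abs_of_pos hR).le
  have hint_add := (hf.comp_mid_add_mul hRR).intervalIntegrable_of_Icc (μ := volume) zero_le_one
  have hint_sub := (hf.comp_mid_sub_mul hRR).intervalIntegrable_of_Icc (μ := volume) zero_le_one
  have hint_left : IntervalIntegrable f volume (m - R) m :=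
    (hf.mono (Icc_subset_Icc le_rfl (by linarith))).intervalIntegrable_of_Icc (by linarith)
  have hint_right : IntervalIntegrable f volume m (m + R) :=
    (hf.mono (Icc_subset_Icc (by linarith) le_rfl)).intervalIntegrable_of_Icc (by linarith)
  have h_add : ∫ t in (0 : ℝ)..1, f (m + R * t) = R⁻¹ * ∫ x in m..m + R, f x := by
    simpa using integral_comp_add_mul f hR.ne' m (a := 0) (b := 1)
  have h_sub : ∫ t in (0 : ℝ)..1, f (m - R * t) = R⁻¹ * ∫ x in m - R..m, f x := by
    simpa using integral_comp_sub_mul f hR.ne' m (a := 0) (b := 1)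
  simp only [symmPart]
  rw [integral_div, integral_add hint_add hint_sub, h_add, h_sub,
    ← integral_add_adjacent_intervals hint_left hint_right]
  field_simp
  ring

theorem ConvexOn.symmPart_mul_le (hconv : ConvexOn ℝ (Icc (m - R) (m + R)) f)
    (hcC : |c| ≤ |C|) (hC : |C| ≤ R) {t : ℝ} (ht : t ∈ Icc (0 : ℝ) 1) :
    symmPart f m (c * t) ≤ symmPart f m (C * t) := by
  have hCt := abs_mul_le_of_mem_Icc ht hC
  refine hconv.symmPart_le (add_mem_Icc_of_abs_le hCt) (sub_mem_Icc_of_abs_le hCt) ?_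
  rw [abs_mul, abs_mul]
  exact mul_le_mul_of_nonneg_right hcC (abs_nonneg t)

theorem ConvexOn.integral_symmPart_mono (hconv : ConvexOn ℝ (Icc (m - R) (m + R)) f)
    (hf : ContinuousOn f (Icc (m - R) (m + R))) (hcC : |c| ≤ |C|) (hC : |C| ≤ R) :
    ∫ t in (0 : ℝ)..1, symmPart f m (c * t) ≤ ∫ t in (0 : ℝ)..1, symmPart f m (C * t) :=
  integral_mono_on zero_le_one
    ((hf.symmPart_comp_mul (hcC.trans hC)).intervalIntegrable_of_Icc zero_le_one)
    ((hf.symmPart_comp_mul hC).intervalIntegrable_of_Icc zero_le_one)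
    fun _ ht ↦ hconv.symmPart_mul_le hcC hC ht

theorem StrictConvexOn.integral_symmPart_strictMono
    (hconv : StrictConvexOn ℝ (Icc (m - R) (m + R)) f)
    (hf : ContinuousOn f (Icc (m - R) (m + R))) (hcC : |c| < |C|) (hC : |C| ≤ R) :
    ∫ t in (0 : ℝ)..1, symmPart f m (c * t) < ∫ t in (0 : ℝ)..1, symmPart f m (C * t) := by
  refine integral_lt_integral_of_continuousOn_of_le_of_exists_lt zero_lt_one
    (hf.symmPart_comp_mul (hcC.le.trans hC)) (hf.symmPart_comp_mul hC)
    (fun _ ht ↦ hconv.convexOn.symmPart_mul_le hcC.le hC (Ioc_subset_Icc_self ht))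
    ⟨1, right_mem_Icc.2 zero_le_one, ?_⟩
  rw [mul_one, mul_one]
  exact hconv.symmPart_lt (add_mem_Icc_of_abs_le hC) (sub_mem_Icc_of_abs_le hC) hcC

end Real

theorem jensen_nested (f : ℝ → ℝ) (a b a' b' : ℝ)
    (h1 : a < a') (h2 : a' < b') (h3 : b' < b) (hmid : a + b = a' + b')
    (hconv : ConvexOn ℝ (Set.Icc a b) f) (hdiff : ContDiffOn ℝ 1 f (Set.Icc a b)) :
    ((1 / (b - a)) * ∫ x in a..b, f x ≥ (1 / (b' - a')) * ∫ x in a'..b', f x ∧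
      (1 / (b' - a')) * ∫ x in a'..b', f x ≥ f ((a + b) / 2)) ∧
    (StrictConvexOn ℝ (Set.Icc a b) f →
      (1 / (b - a)) * ∫ x in a..b, f x > (1 / (b' - a')) * ∫ x in a'..b', f x ∧
      (1 / (b' - a')) * ∫ x in a'..b', f x > f ((a + b) / 2)) := by
  obtain ⟨m, R, r, rfl, rfl, rfl, rfl⟩ :
      ∃ m R r : ℝ, a = m - R ∧ b = m + R ∧ a' = m - r ∧ b' = m + r :=
    ⟨(a + b) / 2, (b - a) / 2, (b' - a') / 2, by ring, by ring, by linarith, by linarith⟩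
  have hr : 0 < r := by linarith
  have hR : 0 < R := by linarith
  have hf : ContinuousOn f (Icc (m - R) (m + R)) := hdiff.continuousOn
  have hf' : ContinuousOn f (Icc (m - r) (m + r)) := hf.mono (Icc_subset_Icc h1.le h3.le)
  have hfm : f m = ∫ t in (0 : ℝ)..1, symmPart f m (0 * t) := by simp [symmPart]
  have h0r : |(0 : ℝ)| < |r| := by rwa [abs_zero, abs_of_pos hr]
  have hrR : |r| < |R| := by rw [abs_of_pos hr, abs_of_pos hR]; linarith
  have hRR : |R| ≤ R := (abs_of_pos hR).le
  rw [show m + R - (m - R) = 2 * R by ring, show m + r - (m - r) = 2 * r by ring,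
    show (m - R + (m + R)) / 2 = m by ring, average_eq_integral_symmPart hR hf,
    average_eq_integral_symmPart hr hf', hfm]
  exact ⟨⟨hconv.integral_symmPart_mono hf hrR.le hRR,
      hconv.integral_symmPart_mono hf h0r.le (hrR.le.trans hRR)⟩,
    fun hsc ↦ ⟨hsc.integral_symmPart_strictMono hf hrR hRR,
      hsc.integral_symmPart_strictMono hf h0r (hrR.le.trans hRR)⟩⟩
end

section
/- Let d ≥ 2 and let u, v ∈ ℝⁿ with u ≠ v and ⟨u,v⟩ ≥ 0. Then the squared spectral norm of the symmetric tensor u^{⊗d} + v^{⊗d} is at least half of its squared Frobenius norm; equivalently, sup over unit vectors w of (⟨u,w⟩^d + ⟨v,w⟩^d)² is at least (‖u‖^{2d} + 2⟨u,v⟩^d + ‖v‖^{2d})/2. -/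
open RealInnerProductSpace

lemma aux_half (d n : ℕ) (u v : EuclideanSpace ℝ (Fin n))
    (hu : u ≠ 0) (hle : ‖v‖ ≤ ‖u‖) (hip : 0 ≤ ⟪u, v⟫) :
    ∃ w : EuclideanSpace ℝ (Fin n), ‖w‖ = 1 ∧
      (⟪u, w⟫ ^ d + ⟪v, w⟫ ^ d) ^ 2 ≥ (‖u‖ ^ (2 * d) + 2 * ⟪u, v⟫ ^ d + ‖v‖ ^ (2 * d)) / 2 := by
  have ht : (0:ℝ) < ‖u‖ := norm_pos_iff.mpr hu
  refine ⟨‖u‖⁻¹ • u, ?_, ?_⟩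
  · simp [norm_smul, abs_of_pos (inv_pos.mpr ht), inv_mul_cancel₀ ht.ne']
  · have h1 : ⟪u, ‖u‖⁻¹ • u⟫ = ‖u‖ := by
      rw [real_inner_smul_right, real_inner_self_eq_norm_sq]
      field_simp
    have h2 : ⟪v, ‖u‖⁻¹ • u⟫ = ⟪u, v⟫ / ‖u‖ := by
      rw [real_inner_smul_right, real_inner_comm]; ring
    rw [h1, h2]
    have hAd : (0:ℝ) < ‖u‖ ^ d := pow_pos ht d
    have hS : (0:ℝ) ≤ ⟪u, v⟫ ^ d := pow_nonneg hip d
    have hB : ‖v‖ ^ d ≤ ‖u‖ ^ d := pow_le_pow_left₀ (norm_nonneg v) hle d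
    have hB0 : (0:ℝ) ≤ ‖v‖ ^ d := pow_nonneg (norm_nonneg v) d
    rw [div_pow, pow_mul', pow_mul', ge_iff_le, div_le_iff₀ (by norm_num : (0:ℝ) < 2)]
    set A := ‖u‖ ^ d with hA
    set S := ⟪u, v⟫ ^ d with hSdef
    set B := ‖v‖ ^ d with hBdef
    have hrw : (A + S / A) ^ 2 * 2 = ((A^2 + S)^2 * 2) / A^2 := by
      field_simp
    rw [hrw, le_div_iff₀ (by positivity)]
    nlinarith [mul_le_mul hB hB hB0 hAd.le, mul_nonneg hS (sq_nonneg A), sq_nonneg S]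

theorem sum_ratio_half (d n : ℕ) (hd : 2 ≤ d) (u v : EuclideanSpace ℝ (Fin n))
    (huv : u ≠ v) (hip : 0 ≤ ⟪u, v⟫) :
    ∃ w : EuclideanSpace ℝ (Fin n), ‖w‖ = 1 ∧
      (⟪u, w⟫ ^ d + ⟪v, w⟫ ^ d) ^ 2 ≥ (‖u‖ ^ (2 * d) + 2 * ⟪u, v⟫ ^ d + ‖v‖ ^ (2 * d)) / 2 := by
  rcases le_total ‖v‖ ‖u‖ with hle | hle
  · have hu : u ≠ 0 := by
      intro h
      apply huv
      have : ‖v‖ ≤ 0 := by simpa [h] using hle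
      have hv : v = 0 := norm_le_zero_iff.mp this
      rw [h, hv]
    exact aux_half d n u v hu hle hip
  · have hv : v ≠ 0 := by
      intro h
      apply huv
      have : ‖u‖ ≤ 0 := by simpa [h] using hle
      have hu : u = 0 := norm_le_zero_iff.mp this
      rw [h, hu]
    obtain ⟨w, hw1, hw2⟩ := aux_half d n v u hv hle (by rwa [real_inner_comm])
    refine ⟨w, hw1, ?_⟩
    rw [real_inner_comm u v, add_comm (⟪v, w⟫ ^ d)] at hw2
    linarith
end

section
/- Let d ≥ 3 and t ∈ (0,1], and set u = (1,t), v = (1,-t) ∈ ℝ². Then (‖u^{⊗d} - v^{⊗d}‖_σ)² > (1 - 1/d)^{d-1} · (‖u^{⊗d} - v^{⊗d}‖_F)², where ‖·‖_σ denotes the spectral norm max_{‖w‖=1}|⟨u,w⟩^d - ⟨v,w⟩^d| and the Frobenius norm satisfies ‖u^{⊗d} - v^{⊗d}‖_F² = 2(1+t²)^d - 2(1-t²)^d. -/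
/-!
Write g(a) = (1 + a)^d - (1 - a)^d, τ = t² and q = 1 - 1/d. The unit vector along (1, y) gives
|p|² = g(ty)² / (1 + y²)^d, so it suffices to find y with 2 q^(d-1) g(τ) (1 + y²)^d < g(ty)².

If (d - 1)τ ≥ 1, take y = t, the direction of u: as (1 - τ)/(1 + τ) ≤ 1 - 2/d, this reduces to
(1 - 2/d)^d + 2 q^(d-1) < 1, which follows from (1 - 2/d)^d ≤ e⁻² < 1/7 and from
(1 + 1/m)^m ≥ 7/3 for m ≥ 3.

If (d - 1)τ < 1, take y = 1/√(d - 1), so that q^(d-1) (1 + y²)^d = d/(d - 1), and put s = ty.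
The linear terms of (d/(d - 1)) · 2g(τ) and of g(s)² coincide, and the next terms are in ratio
(d - 1)τ < 1. The third-order bounds on g needed for this follow by induction from
(1 + a)^(n+1) ∓ (1 - a)^(n+1) = ((1 + a)^n ∓ (1 - a)^n) + a ((1 + a)^n ± (1 - a)^n).
-/

theorem one_add_pow_pm_one_sub_pow_ge {s : ℝ} (hs : 0 ≤ s) (n : ℕ) :
    2 * n * s + n * (n - 1) * (n - 2) / 3 * s ^ 3 ≤ (1 + s) ^ n - (1 - s) ^ n ∧
      2 + n * (n - 1) * s ^ 2 ≤ (1 + s) ^ n + (1 - s) ^ n := by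
  induction n with
  | zero => norm_num
  | succ n ih =>
    obtain ⟨hA, hB⟩ := ih
    have hn : (0 : ℝ) ≤ n * (n - 1) * (n - 2) := by
      rcases n with _ | _ | n
      · simp
      · simp
      · push_cast; ring_nf; positivity
    have hA' := mul_le_mul_of_nonneg_left hA hs
    have hB' := mul_le_mul_of_nonneg_left hB hs
    have hsub : (1 + s) ^ (n + 1) - (1 - s) ^ (n + 1) =
        (1 + s) ^ n - (1 - s) ^ n + s * ((1 + s) ^ n + (1 - s) ^ n) := by ring
    have hadd : (1 + s) ^ (n + 1) + (1 - s) ^ (n + 1) =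
        (1 + s) ^ n + (1 - s) ^ n + s * ((1 + s) ^ n - (1 - s) ^ n) := by ring
    rw [hsub, hadd]
    push_cast
    constructor
    · linarith
    · nlinarith [mul_nonneg hn (pow_nonneg hs 4)]

theorem one_add_pow_pm_one_sub_pow_succ_le {τ : ℝ} (hτ : 0 ≤ τ) {n : ℕ} (hn : n * τ ≤ 1) :
    (1 + τ) ^ (n + 1) - (1 - τ) ^ (n + 1) ≤
        2 * (n + 1) * τ + 2 / 3 * (n + 1) * n * (n - 1) * τ ^ 3 ∧
      (1 + τ) ^ (n + 1) + (1 - τ) ^ (n + 1) ≤ 2 + 2 * (n + 1) * n * τ ^ 2 := by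
  induction n with
  | zero => constructor <;> ring_nf <;> simp
  | succ n ih =>
    push_cast at hn ⊢
    obtain ⟨hA, hB⟩ := ih (by linarith)
    have hA' := mul_le_mul_of_nonneg_left hA hτ
    have hB' := mul_le_mul_of_nonneg_left hB hτ
    have hsq : n * (n - 1) * τ ^ 2 ≤ 3 := by
      nlinarith [mul_nonneg (Nat.cast_nonneg n : (0 : ℝ) ≤ n) hτ]
    have hsub : (1 + τ) ^ (n + 1 + 1) - (1 - τ) ^ (n + 1 + 1) =
        (1 + τ) ^ (n + 1) - (1 - τ) ^ (n + 1) + τ * ((1 + τ) ^ (n + 1) + (1 - τ) ^ (n + 1)) := by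
      ring
    have hadd : (1 + τ) ^ (n + 1 + 1) + (1 - τ) ^ (n + 1 + 1) =
        (1 + τ) ^ (n + 1) + (1 - τ) ^ (n + 1) + τ * ((1 + τ) ^ (n + 1) - (1 - τ) ^ (n + 1)) := by
      ring
    rw [hsub, hadd]
    constructor
    · linarith
    · nlinarith [mul_le_mul_of_nonneg_left hsq (by positivity : (0 : ℝ) ≤ (n + 1) * τ ^ 2)]

theorem seven_thirds_le_one_add_inv_pow {m : ℕ} (hm : 3 ≤ m) : 7 / 3 ≤ (1 + (m : ℝ)⁻¹) ^ m := by
  have hm' : (3 : ℝ) ≤ m := by exact_mod_cast hm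
  obtain ⟨hA, hB⟩ := one_add_pow_pm_one_sub_pow_ge (inv_nonneg.mpr (Nat.cast_nonneg m)) m
  have hcubic : 0 ≤ (m : ℝ) * (m - 1) * (m - 2) / 3 * (m : ℝ)⁻¹ ^ 3 := by
    have : (0 : ℝ) ≤ m - 1 := by linarith
    have : (0 : ℝ) ≤ m - 2 := by linarith
    positivity
  have hlin : 2 * (m : ℝ) * (m : ℝ)⁻¹ = 2 := by field_simp
  have hquad : (m : ℝ) * (m - 1) * (m : ℝ)⁻¹ ^ 2 = 1 - (m : ℝ)⁻¹ := by field_simp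
  have hinv : (m : ℝ)⁻¹ ≤ 1 / 3 := by rw [inv_le_comm₀ (by positivity) (by norm_num)]; linarith
  linarith

theorem one_sub_two_div_pow_add_two_mul_one_sub_one_div_pow_lt_one {d : ℕ} (hd : 3 ≤ d) :
    (1 - 2 / (d : ℝ)) ^ d + 2 * (1 - 1 / (d : ℝ)) ^ (d - 1) < 1 := by
  rcases hd.eq_or_lt with rfl | hd4
  · norm_num
  obtain ⟨m, rfl⟩ : ∃ m, d = m + 1 := ⟨d - 1, by omega⟩
  have hm3 : 3 ≤ m := by omega
  have hm : (3 : ℝ) ≤ m := by exact_mod_cast hm3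
  have hexp : (1 - 2 / ((m + 1 : ℕ) : ℝ)) ^ (m + 1) < 1 / 7 := by
    calc _ ≤ Real.exp (-2) := Real.one_sub_div_pow_le_exp_neg (by push_cast; linarith)
      _ < 1 / 7 := by
        rw [Real.exp_neg, show (2 : ℝ) = 1 + 1 by norm_num, Real.exp_add,
          inv_lt_comm₀ (by positivity) (by norm_num)]
        nlinarith [Real.exp_one_gt_d9]
  have hbase : 1 - 1 / ((m + 1 : ℕ) : ℝ) = (1 + (m : ℝ)⁻¹)⁻¹ := by
    have : (0 : ℝ) < m := by linarith
    push_cast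
    field_simp
    ring
  have hpow : (1 - 1 / ((m + 1 : ℕ) : ℝ)) ^ (m + 1 - 1) ≤ 3 / 7 := by
    rw [Nat.add_sub_cancel, hbase, inv_pow, inv_le_comm₀ (by positivity) (by norm_num)]
    simpa using seven_thirds_le_one_add_inv_pow hm3
  linarith

theorem lt_sq_pow_sub_pow_of_one_le_pred_mul {d : ℕ} (hd : 3 ≤ d) {τ : ℝ} (hτ1 : τ ≤ 1)
    (hlarge : 1 ≤ ((d : ℝ) - 1) * τ) :
    (1 - 1 / (d : ℝ)) ^ (d - 1) * (2 * (1 + τ) ^ d - 2 * (1 - τ) ^ d) * (1 + τ) ^ d <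
      ((1 + τ) ^ d - (1 - τ) ^ d) ^ 2 := by
  have hd' : (3 : ℝ) ≤ d := by exact_mod_cast hd
  have hτ0 : 0 < τ := by nlinarith
  have hratio : 1 - τ ≤ (1 - 2 / (d : ℝ)) * (1 + τ) := by
    rw [sub_mul, div_mul_eq_mul_div, le_sub_iff_add_le, ← le_sub_iff_add_le',
      div_le_iff₀ (by positivity)]
    nlinarith
  have hw : (1 - τ) ^ d ≤ (1 - 2 / (d : ℝ)) ^ d * (1 + τ) ^ d := by
    rw [← mul_pow]
    exact pow_le_pow_left₀ (by linarith) hratio d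
  have hc : 0 < (1 + τ) ^ d := by positivity
  have hgap : 2 * (1 - 1 / (d : ℝ)) ^ (d - 1) * (1 + τ) ^ d < (1 + τ) ^ d - (1 - τ) ^ d := by
    have key := one_sub_two_div_pow_add_two_mul_one_sub_one_div_pow_lt_one hd
    nlinarith [mul_lt_mul_of_pos_right key hc]
  calc (1 - 1 / (d : ℝ)) ^ (d - 1) * (2 * (1 + τ) ^ d - 2 * (1 - τ) ^ d) * (1 + τ) ^ d
      = ((1 + τ) ^ d - (1 - τ) ^ d) * (2 * (1 - 1 / (d : ℝ)) ^ (d - 1) * (1 + τ) ^ d) := by ring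
    _ < ((1 + τ) ^ d - (1 - τ) ^ d) * ((1 + τ) ^ d - (1 - τ) ^ d) := by
      have hq : 0 ≤ 1 - 1 / (d : ℝ) := by rw [sub_nonneg, div_le_one₀ (by positivity)]; linarith
      have : 0 ≤ 2 * (1 - 1 / (d : ℝ)) ^ (d - 1) * (1 + τ) ^ d := by positivity
      exact mul_lt_mul_of_pos_left hgap (by linarith)
    _ = ((1 + τ) ^ d - (1 - τ) ^ d) ^ 2 := (sq _).symm

theorem lt_sq_pow_sub_pow_of_pred_mul_lt_one {d : ℕ} (hd : 3 ≤ d) {s τ : ℝ} (hs : 0 < s)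
    (hτ : τ = ((d : ℝ) - 1) * s ^ 2) (hsmall : ((d : ℝ) - 1) * τ < 1) :
    (1 - 1 / (d : ℝ)) ^ (d - 1) * (2 * (1 + τ) ^ d - 2 * (1 - τ) ^ d) * (1 + ((d : ℝ) - 1)⁻¹) ^ d <
      ((1 + s) ^ d - (1 - s) ^ d) ^ 2 := by
  obtain ⟨m, rfl⟩ : ∃ m, d = m + 1 := ⟨d - 1, by omega⟩
  have hm : (2 : ℝ) ≤ m := by exact_mod_cast (by omega : 2 ≤ m)
  push_cast at hτ hsmall ⊢
  simp only [add_sub_cancel_right] at *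
  have hfactor : (1 - 1 / ((m : ℝ) + 1)) ^ m * (1 + (m : ℝ)⁻¹) ^ (m + 1) = (m + 1) / m := by
    have h1 : 1 - 1 / ((m : ℝ) + 1) = (1 + (m : ℝ)⁻¹)⁻¹ := by field_simp; ring
    rw [h1, inv_pow, pow_succ]
    field_simp
  obtain ⟨hlower, -⟩ := one_add_pow_pm_one_sub_pow_ge hs.le (m + 1)
  obtain ⟨hupper, -⟩ := one_add_pow_pm_one_sub_pow_succ_le (by rw [hτ]; positivity : 0 ≤ τ)
    (by linarith : (m : ℝ) * τ ≤ 1)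
  have hm1 : (0 : ℝ) < m - 1 := by linarith
  set L := 2 * ((m : ℝ) + 1) * s + (m + 1) * m * (m - 1) / 3 * s ^ 3
  have hL : L ≤ (1 + s) ^ (m + 1) - (1 - s) ^ (m + 1) := by convert hlower using 1; push_cast; ring
  set U := 2 * ((m : ℝ) + 1) * τ + 2 / 3 * (m + 1) * m * (m - 1) * τ ^ 3 with hU
  have hgap : 0 < L ^ 2 - 2 * (m + 1) / m * U := by
    have hsq : (m : ℝ) ^ 2 * s ^ 2 < 1 := by rw [hτ] at hsmall; linarith
    have hexpand : L ^ 2 - 2 * (m + 1) / m * U =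
        4 / 3 * (m + 1) ^ 2 * m * (m - 1) * s ^ 4 * (1 - m ^ 2 * s ^ 2) +
          ((m + 1) * m * (m - 1) / 3) ^ 2 * s ^ 6 := by
      rw [hU, hτ]; field_simp; ring
    rw [hexpand]
    have : 0 < 1 - (m : ℝ) ^ 2 * s ^ 2 := by linarith
    positivity
  calc (1 - 1 / ((m : ℝ) + 1)) ^ m * (2 * (1 + τ) ^ (m + 1) - 2 * (1 - τ) ^ (m + 1)) *
        (1 + (m : ℝ)⁻¹) ^ (m + 1)
      = 2 * (m + 1) / m * ((1 + τ) ^ (m + 1) - (1 - τ) ^ (m + 1)) := by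
        rw [mul_right_comm, hfactor]; ring
    _ ≤ 2 * (m + 1) / m * U := by gcongr
    _ < L ^ 2 := by linarith
    _ ≤ ((1 + s) ^ (m + 1) - (1 - s) ^ (m + 1)) ^ 2 := pow_le_pow_left₀ (by positivity) hL 2

theorem bddAbove_abs_add_mul_pow_sub_sub_mul_pow (d : ℕ) (t : ℝ) :
    BddAbove {z : ℝ | ∃ x y : ℝ, x ^ 2 + y ^ 2 = 1 ∧ z = |(x + t * y) ^ d - (x - t * y) ^ d|} := by
  refine ⟨2 * (1 + |t|) ^ d, ?_⟩
  rintro _ ⟨x, y, hxy, rfl⟩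
  have hx : |x| ≤ 1 := sq_le_one_iff_abs_le_one x |>.mp (by nlinarith)
  have hy : |y| ≤ 1 := sq_le_one_iff_abs_le_one y |>.mp (by nlinarith)
  have hty : |t| * |y| ≤ |t| := mul_le_of_le_one_right (abs_nonneg t) hy
  have hplus : |x + t * y| ≤ 1 + |t| := (abs_add_le _ _).trans (by rw [abs_mul]; linarith)
  have hminus : |x - t * y| ≤ 1 + |t| := (abs_sub _ _).trans (by rw [abs_mul]; linarith)
  calc |(x + t * y) ^ d - (x - t * y) ^ d| ≤ |x + t * y| ^ d + |x - t * y| ^ d := by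
        rw [← abs_pow, ← abs_pow]; exact abs_sub _ _
    _ ≤ 2 * (1 + |t|) ^ d := by
        have := pow_le_pow_left₀ (abs_nonneg _) hplus d
        have := pow_le_pow_left₀ (abs_nonneg _) hminus d
        linarith

theorem lt_sSup_sq_of_lt_mul_one_add_sq_pow (d : ℕ) (t R y : ℝ)
    (h : R * (1 + y ^ 2) ^ d < ((1 + t * y) ^ d - (1 - t * y) ^ d) ^ 2) :
    R < (sSup {z : ℝ | ∃ x y : ℝ, x ^ 2 + y ^ 2 = 1 ∧
      z = |(x + t * y) ^ d - (x - t * y) ^ d|}) ^ 2 := by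
  set ρ := √(1 + y ^ 2)
  have hρ : 0 < ρ := Real.sqrt_pos.mpr (by positivity)
  have hρ2 : ρ ^ 2 = 1 + y ^ 2 := Real.sq_sqrt (by positivity)
  have hmem : |((1 + t * y) ^ d - (1 - t * y) ^ d) / ρ ^ d| ∈
      {z : ℝ | ∃ x y : ℝ, x ^ 2 + y ^ 2 = 1 ∧ z = |(x + t * y) ^ d - (x - t * y) ^ d|} := by
    refine ⟨ρ⁻¹, y / ρ, ?_, ?_⟩
    · field_simp; linarith
    · rw [show ρ⁻¹ + t * (y / ρ) = (1 + t * y) / ρ by field_simp,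
        show ρ⁻¹ - t * (y / ρ) = (1 - t * y) / ρ by field_simp, div_pow, div_pow, sub_div]
  have hle := pow_le_pow_left₀ (abs_nonneg _)
    (le_csSup (bddAbove_abs_add_mul_pow_sub_sub_mul_pow d t) hmem) 2
  rw [sq_abs, div_pow, ← pow_mul, mul_comm d 2, pow_mul, hρ2, div_le_iff₀ (by positivity)] at hle
  exact lt_of_mul_lt_mul_right (h.trans_le hle) (by positivity)

theorem diff_equal_norm_ratio (d : ℕ) (hd : 3 ≤ d) (t : ℝ) (ht : t ∈ Set.Ioc (0 : ℝ) 1) :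
    (sSup {z : ℝ | ∃ x y : ℝ, x ^ 2 + y ^ 2 = 1 ∧
        z = |(x + t * y) ^ d - (x - t * y) ^ d|}) ^ 2 >
      (1 - 1 / (d : ℝ)) ^ (d - 1) * (2 * (1 + t ^ 2) ^ d - 2 * (1 - t ^ 2) ^ d) := by
  obtain ⟨ht0, ht1⟩ := ht
  rcases lt_or_ge (((d : ℝ) - 1) * t ^ 2) 1 with hsmall | hlarge
  · have hd1 : (0 : ℝ) < d - 1 := by
      have : (3 : ℝ) ≤ d := by exact_mod_cast hd
      linarith
    set y := (√((d : ℝ) - 1))⁻¹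
    have hy2 : y ^ 2 = ((d : ℝ) - 1)⁻¹ := by rw [inv_pow, Real.sq_sqrt hd1.le]
    apply lt_sSup_sq_of_lt_mul_one_add_sq_pow d t _ y
    rw [hy2]
    refine lt_sq_pow_sub_pow_of_pred_mul_lt_one hd (by positivity) ?_ hsmall
    rw [mul_pow, hy2]
    field_simp
  · apply lt_sSup_sq_of_lt_mul_one_add_sq_pow d t _ t
    rw [← sq]
    exact lt_sq_pow_sub_pow_of_one_le_pred_mul hd (by nlinarith) hlarge
end

section
/- For d ≥ 3 and t ∈ (0, 1/√(d-1)), the quantity ((√(d-1)+t)^d - (√(d-1)-t)^d)² / (d^d·(2(1+t²)^d - 2(1-t²)^d)) is strictly increasing in t. -/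
/-!
Write `a = s + t`, `b = s - t`, `c = 1 + t²`, `e = 1 - t²` with `s = √(d - 1)`. Up to positive
factors, the derivative of `h² / g` is
`(a^(d-1) + b^(d-1)) (c^d - e^d) - t (a^d - b^d) (c^(d-1) + e^(d-1))`,
and `2t` times this equals `(q - r)(p^(d-1) - w^(d-1)) - (p - w)(q^(d-1) - r^(d-1))`
for `p = ac`, `q = ae`, `r = bc`, `w = be`. When `t s < 1` these satisfy `w < r < q < p` and
`pw = qr`, and for two pairs with the same product the divided difference `(x^n - y^n) / (x - y)`
is larger for the pair that is further apart; this follows by induction on `n`.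
-/

open Set

/-- Positive exactly when `(q ^ n - r ^ n) / (q - r) < (p ^ n - w ^ n) / (p - w)` for `r < q`,
`w < p`. -/
def crossGap (p q r w : ℝ) (n : ℕ) : ℝ :=
  (q - r) * (p ^ n - w ^ n) - (p - w) * (q ^ n - r ^ n)

theorem crossGap_succ (p q r w : ℝ) (n : ℕ) :
    2 * crossGap p q r w (n + 1) =
      (q + r) * crossGap p q r w n + (q - r) * (p - w) * (p ^ n + w ^ n - (q ^ n + r ^ n)) +
        (p + w - (q + r)) * (q - r) * (p ^ n - w ^ n) := by
  unfold crossGap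
  ring

section EqualProducts

variable {p q r w : ℝ}

theorem pow_add_pow_le_pow_add_pow_of_mul_eq (hr : 0 ≤ r) (hrq : r ≤ q) (hqp : q ≤ p)
    (hp : 0 < p) (hm : p * w = q * r) (n : ℕ) : q ^ n + r ^ n ≤ p ^ n + w ^ n := by
  have hfactor : p ^ n * (p ^ n + w ^ n - (q ^ n + r ^ n)) = (p ^ n - q ^ n) * (p ^ n - r ^ n) := by
    have hmn : (p * w) ^ n = (q * r) ^ n := by rw [hm]
    rw [mul_pow, mul_pow] at hmn
    linear_combination hmn
  have hprod : 0 ≤ (p ^ n - q ^ n) * (p ^ n - r ^ n) :=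
    mul_nonneg (sub_nonneg.2 (pow_le_pow_left₀ (hr.trans hrq) hqp n))
      (sub_nonneg.2 (pow_le_pow_left₀ hr (hrq.trans hqp) n))
  rw [← hfactor] at hprod
  linarith [nonneg_of_mul_nonneg_right hprod (pow_pos hp n)]

theorem crossGap_nonneg (hr : 0 ≤ r) (hrq : r ≤ q) (hqp : q ≤ p) (hp : 0 < p)
    (hm : p * w = q * r) (n : ℕ) : 0 ≤ crossGap p q r w n := by
  have hw : 0 ≤ w := nonneg_of_mul_nonneg_right (hm ▸ mul_nonneg (hr.trans hrq) hr) hp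
  have hwp : w ≤ p := le_of_mul_le_mul_left (by nlinarith) hp
  have hsum := pow_add_pow_le_pow_add_pow_of_mul_eq hr hrq hqp hp hm
  induction n with
  | zero => simp [crossGap]
  | succ n ih =>
    have hrec := crossGap_succ p q r w n
    have hspread := hsum 1
    simp only [pow_one] at hspread
    nlinarith [mul_nonneg (by linarith : 0 ≤ q + r) ih,
      mul_nonneg (mul_nonneg (sub_nonneg.2 hrq) (sub_nonneg.2 hwp)) (sub_nonneg.2 (hsum n)),
      mul_nonneg (mul_nonneg (sub_nonneg.2 hspread) (sub_nonneg.2 hrq))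
        (sub_nonneg.2 (pow_le_pow_left₀ hw hwp n))]

theorem crossGap_pos (hr : 0 ≤ r) (hrq : r < q) (hqp : q < p) (hm : p * w = q * r) {n : ℕ}
    (hn : 2 ≤ n) : 0 < crossGap p q r w n := by
  obtain ⟨n, rfl⟩ : ∃ k, n = k + 1 := ⟨n - 1, by omega⟩
  have hp : 0 < p := by linarith
  have hw : 0 ≤ w := nonneg_of_mul_nonneg_right (hm ▸ mul_nonneg (hr.trans hrq.le) hr) hp
  have hwp : w < p := lt_of_mul_lt_mul_left (by nlinarith) hp.le
  -- `p (p + w - (q + r)) = (p - q)(p - r)` since `pw = qr`.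
  have hspread : 0 < p + w - (q + r) :=
    pos_of_mul_pos_right (by nlinarith [mul_pos (sub_pos.2 hqp) (sub_pos.2 (hrq.trans hqp))]) hp.le
  have hrec := crossGap_succ p q r w n
  nlinarith [mul_nonneg (by linarith : 0 ≤ q + r) (crossGap_nonneg hr hrq.le hqp.le hp hm n),
    mul_nonneg (mul_nonneg (sub_nonneg.2 hrq.le) (sub_nonneg.2 hwp.le))
      (sub_nonneg.2 (pow_add_pow_le_pow_add_pow_of_mul_eq hr hrq.le hqp.le hp hm n)),
    mul_pos (mul_pos hspread (sub_pos.2 hrq))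
      (sub_pos.2 (pow_lt_pow_left₀ hwp hw (by omega : n ≠ 0)))]

end EqualProducts

theorem mul_pow_sub_pow_mul_pow_add_pow_lt {s t : ℝ} {m : ℕ} (hm : 2 ≤ m) (ht : 0 < t)
    (hts : t < s) (hst : s * t < 1) :
    t * ((s + t) ^ (m + 1) - (s - t) ^ (m + 1)) * ((1 + t ^ 2) ^ m + (1 - t ^ 2) ^ m) <
      ((s + t) ^ m + (s - t) ^ m) * ((1 + t ^ 2) ^ (m + 1) - (1 - t ^ 2) ^ (m + 1)) := by
  have ht1 : t ^ 2 < 1 := by nlinarith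
  have hgap := crossGap_pos (p := (s + t) * (1 + t ^ 2)) (q := (s + t) * (1 - t ^ 2))
    (r := (s - t) * (1 + t ^ 2)) (w := (s - t) * (1 - t ^ 2))
    (by nlinarith) (by nlinarith) (by nlinarith [mul_pos (by linarith : 0 < s + t) (pow_pos ht 2)])
    (by ring) hm
  have hid : crossGap ((s + t) * (1 + t ^ 2)) ((s + t) * (1 - t ^ 2)) ((s - t) * (1 + t ^ 2))
      ((s - t) * (1 - t ^ 2)) m =
      2 * t * (((s + t) ^ m + (s - t) ^ m) * ((1 + t ^ 2) ^ (m + 1) - (1 - t ^ 2) ^ (m + 1)) -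
        t * ((s + t) ^ (m + 1) - (s - t) ^ (m + 1)) * ((1 + t ^ 2) ^ m + (1 - t ^ 2) ^ m)) := by
    simp only [crossGap, mul_pow]
    ring
  rw [hid] at hgap
  linarith [pos_of_mul_pos_right hgap (by positivity)]

theorem strictMonoOn_sq_div_of_hasDerivAt {f g f' g' : ℝ → ℝ} {a b : ℝ}
    (hf : ∀ x ∈ Ioo a b, HasDerivAt f (f' x) x) (hg : ∀ x ∈ Ioo a b, HasDerivAt g (g' x) x)
    (hf₀ : ∀ x ∈ Ioo a b, 0 < f x) (hg₀ : ∀ x ∈ Ioo a b, 0 < g x)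
    (hfg : ∀ x ∈ Ioo a b, f x * g' x < 2 * f' x * g x) :
    StrictMonoOn (fun x => f x ^ 2 / g x) (Ioo a b) := by
  have hderiv : ∀ x ∈ Ioo a b, HasDerivAt (fun x => f x ^ 2 / g x)
      (f x * (2 * f' x * g x - f x * g' x) / g x ^ 2) x := fun x hx =>
    (((hf x hx).fun_pow 2).fun_div (hg x hx) (hg₀ x hx).ne').congr_deriv (by ring)
  refine strictMonoOn_of_hasDerivWithinAt_pos (convex_Ioo a b)
    (f' := fun x => f x * (2 * f' x * g x - f x * g' x) / g x ^ 2)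
    (fun x hx => (hderiv x hx).continuousAt.continuousWithinAt) (fun x hx => ?_) (fun x hx => ?_)
  · rw [interior_Ioo] at hx ⊢
    exact (hderiv x hx).hasDerivWithinAt
  · rw [interior_Ioo] at hx
    exact div_pos (mul_pos (hf₀ x hx) (sub_pos.2 (hfg x hx))) (pow_pos (hg₀ x hx) 2)

theorem hasDerivAt_add_pow_sub_sub_pow (s t : ℝ) (m : ℕ) :
    HasDerivAt (fun t => (s + t) ^ (m + 1) - (s - t) ^ (m + 1))
      ((m + 1) * ((s + t) ^ m + (s - t) ^ m)) t :=
  ((((hasDerivAt_id' t).const_add s).fun_pow (m + 1)).fun_sub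
    (((hasDerivAt_id' t).const_sub s).fun_pow (m + 1))).congr_deriv (by push_cast; ring)

theorem hasDerivAt_one_add_sq_pow_sub_one_sub_sq_pow (t : ℝ) (m : ℕ) :
    HasDerivAt (fun t => 2 * (1 + t ^ 2) ^ (m + 1) - 2 * (1 - t ^ 2) ^ (m + 1))
      (4 * (m + 1) * t * ((1 + t ^ 2) ^ m + (1 - t ^ 2) ^ m)) t :=
  ((((hasDerivAt_pow 2 t).const_add 1).fun_pow (m + 1)).const_mul 2).fun_sub
    ((((hasDerivAt_pow 2 t).const_sub 1).fun_pow (m + 1)).const_mul 2)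
    |>.congr_deriv (by push_cast; ring)

theorem ratio_strict_mono (d : ℕ) (hd : 3 ≤ d) :
    StrictMonoOn
      (fun t : ℝ =>
        ((Real.sqrt ((d : ℝ) - 1) + t) ^ d - (Real.sqrt ((d : ℝ) - 1) - t) ^ d) ^ 2 /
          ((d : ℝ) ^ d * (2 * (1 + t ^ 2) ^ d - 2 * (1 - t ^ 2) ^ d)))
      (Set.Ioo 0 (1 / Real.sqrt ((d : ℝ) - 1))) := by
  obtain ⟨m, rfl⟩ : ∃ m, d = m + 1 := ⟨d - 1, by omega⟩
  have hm : 2 ≤ m := by omega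
  set s := Real.sqrt (((m + 1 : ℕ) : ℝ) - 1)
  have hs : 1 ≤ s := by
    have : (2 : ℝ) ≤ m := by exact_mod_cast hm
    exact Real.one_le_sqrt.mpr (by push_cast; linarith)
  have hrange : ∀ t ∈ Ioo 0 (1 / s), 0 < t ∧ t < s ∧ s * t < 1 ∧ t ^ 2 < 1 := by
    rintro t ⟨ht, hts⟩
    rw [lt_div_iff₀ (by linarith)] at hts
    exact ⟨ht, by nlinarith, by linarith, by nlinarith⟩
  have hK : 0 < ((m + 1 : ℕ) : ℝ) ^ (m + 1) := by positivity
  refine strictMonoOn_sq_div_of_hasDerivAt (fun t _ => hasDerivAt_add_pow_sub_sub_pow s t m)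
    (fun t _ => (hasDerivAt_one_add_sq_pow_sub_one_sub_sq_pow t m).const_mul _) ?_ ?_ ?_
  · intro t ht
    obtain ⟨ht, hts, -, -⟩ := hrange t ht
    exact sub_pos.2 (pow_lt_pow_left₀ (by linarith) (by linarith) (by omega))
  · intro t ht
    obtain ⟨ht, -, -, ht1⟩ := hrange t ht
    have := pow_lt_pow_left₀ (by nlinarith : 1 - t ^ 2 < 1 + t ^ 2) (by linarith)
      (by omega : m + 1 ≠ 0)
    exact mul_pos hK (by linarith)
  · intro t ht
    obtain ⟨ht, hts, hst, -⟩ := hrange t ht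
    linear_combination (mul_lt_mul_of_pos_left (mul_pow_sub_pow_mul_pow_add_pow_lt hm ht hts hst)
      (by positivity : 0 < 4 * ((m : ℝ) + 1) * ((m + 1 : ℕ) : ℝ) ^ (m + 1)))
end

section
/- Let d ≥ 3 and a, b ≥ 0 with a² + b²d = 1 and a > 0. Then the maximum over unit vectors (x,y) ∈ ℝ² of |a·x^d + b·d·x^{d-1}·y| is strictly greater than ((d-1)/d)^{(d-1)/2}. -/
/-!
Two test points already beat the bound between them. At `(1, 0)` the form
takes the value `a`. At the maximiser of `W_d`, `(s, 1/√d)` with `s = √((d-1)/d)`, it takes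
the value `s^(d-1) (a s + √(1 - a²))`, and `s^(d-1)` is exactly the claimed bound. So either
`a > s^(d-1)`, or `a ≤ s^(d-1) ≤ s²`, and then `a s + √(1 - a²) > 1` because
`a (1 + s²) ≤ s² (1 + s²) < 2 s`.
-/

open Real

lemma lt_sSup_abs_of_lt {f : ℝ → ℝ → ℝ} {M c x y : ℝ}
    (hM : ∀ x y, x ^ 2 + y ^ 2 = 1 → |f x y| ≤ M) (hxy : x ^ 2 + y ^ 2 = 1) (hc : c < |f x y|) :
    c < sSup {z : ℝ | ∃ x y : ℝ, x ^ 2 + y ^ 2 = 1 ∧ z = |f x y|} :=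
  lt_csSup_of_lt ⟨M, by rintro _ ⟨x, y, hxy, rfl⟩; exact hM x y hxy⟩ ⟨x, y, hxy, rfl⟩ hc

lemma abs_mul_pow_add_mul_pow_mul_le {x y : ℝ} (hxy : x ^ 2 + y ^ 2 = 1) (a b : ℝ) (m n : ℕ) :
    |a * x ^ m + b * x ^ n * y| ≤ |a| + |b| := by
  have hx : |x| ≤ 1 := (sq_le_one_iff_abs_le_one x).mp (by nlinarith)
  have hy : |y| ≤ 1 := (sq_le_one_iff_abs_le_one y).mp (by nlinarith)
  have hxm : |x| ^ m ≤ 1 := pow_le_one₀ (abs_nonneg x) hx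
  have hxny : |x| ^ n * |y| ≤ 1 := mul_le_one₀ (pow_le_one₀ (abs_nonneg x) hx) (abs_nonneg y) hy
  calc |a * x ^ m + b * x ^ n * y|
      ≤ |a| * |x| ^ m + |b| * (|x| ^ n * |y|) := by
        simpa only [abs_mul, abs_pow, mul_assoc] using abs_add_le (a * x ^ m) (b * x ^ n * y)
    _ ≤ |a| + |b| := by
        gcongr <;> exact mul_le_of_le_one_right (abs_nonneg _) ‹_›

lemma one_lt_mul_add_sqrt_one_sub_sq {a s : ℝ} (ha : 0 < a) (hs : 0 < s) (hs1 : s < 1)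
    (has : a ≤ s ^ 2) : 1 < a * s + √(1 - a ^ 2) := by
  have hlt : a * (1 + s ^ 2) < 2 * s :=
    calc a * (1 + s ^ 2) ≤ s ^ 2 * (1 + s ^ 2) := by gcongr
      _ < 2 * s := by nlinarith [mul_pos hs (mul_pos hs hs)]
  have hsq : (1 - a * s) ^ 2 < 1 - a ^ 2 := by nlinarith [mul_lt_mul_of_pos_left hlt ha]
  linarith [lt_sqrt_of_sq_lt hsq]

lemma mul_pow_add_mul_pow_pred_mul_inv_sqrt {d : ℕ} (hd : d ≠ 0) {a b : ℝ} (hb : 0 ≤ b)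
    (hnorm : a ^ 2 + b ^ 2 * d = 1) (s : ℝ) :
    a * s ^ d + b * d * s ^ (d - 1) * (√d)⁻¹ = s ^ (d - 1) * (a * s + √(1 - a ^ 2)) := by
  have hbd : b * d * (√d)⁻¹ = √(1 - a ^ 2) := by
    rw [← div_eq_mul_inv, mul_div_assoc, div_sqrt, ← hnorm, add_sub_cancel_left,
      sqrt_mul (sq_nonneg b), sqrt_sq hb]
  rw [← hbd, ← pow_sub_one_mul hd s]
  ring

theorem boundary_spectral (d : ℕ) (hd : 3 ≤ d) (a b : ℝ) (ha : 0 < a) (hb : 0 ≤ b)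
    (hnorm : a ^ 2 + b ^ 2 * d = 1) :
    sSup {z : ℝ | ∃ x y : ℝ, x ^ 2 + y ^ 2 = 1 ∧
        z = |a * x ^ d + b * d * x ^ (d - 1) * y|} >
      (((d : ℝ) - 1) / d) ^ (((d : ℝ) - 1) / 2) := by
  have hd0 : (0 : ℝ) < d := by positivity
  have hd3 : (3 : ℝ) ≤ d := by exact_mod_cast hd
  have hu : 0 < ((d : ℝ) - 1) / d := div_pos (by linarith) hd0
  set s := √(((d : ℝ) - 1) / d) with hs
  have hs2 : s ^ 2 = ((d : ℝ) - 1) / d := sq_sqrt hu.le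
  have hs0 : 0 < s := sqrt_pos.mpr hu
  have hs1 : s < 1 := by
    have : s ^ 2 < 1 := by rw [hs2, div_lt_one hd0]; linarith
    nlinarith
  have hbound := fun x y (hxy : x ^ 2 + y ^ 2 = 1) ↦
    abs_mul_pow_add_mul_pow_mul_le hxy a (b * d) d (d - 1)
  have hrpow : (((d : ℝ) - 1) / d) ^ (((d : ℝ) - 1) / 2) = s ^ (d - 1) := by
    rw [← rpow_natCast, hs, ← rpow_div_two_eq_sqrt _ hu.le, Nat.cast_pred (by omega)]
  rw [gt_iff_lt, hrpow]
  rcases lt_or_ge (s ^ (d - 1)) a with hlt | hge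
  · exact lt_sSup_abs_of_lt hbound (x := 1) (y := 0) (by norm_num) (by simpa [abs_of_pos ha])
  · have has : a ≤ s ^ 2 := hge.trans (pow_le_pow_of_le_one hs0.le hs1.le (by omega))
    refine lt_sSup_abs_of_lt hbound (x := s) (y := (√d)⁻¹) ?_ ?_
    · rw [hs2, inv_pow, sq_sqrt hd0.le]; field_simp; ring
    · rw [mul_pow_add_mul_pow_pred_mul_inv_sqrt (by omega) hb hnorm, abs_of_pos (by positivity)]
      exact lt_mul_of_one_lt_right (pow_pos hs0 _) (one_lt_mul_add_sqrt_one_sub_sq ha hs0 hs1 has)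
end

section
/- Let d ≥ 3, a ∈ (0,1), b ≥ 0 with a² + b²d = 1 and b > (√d - a√(d-1))/d. Then (1/d^{d/2})·(a·(d-1)^{d/2} + b·d·(d-1)^{(d-1)/2}) > ((d-1)/d)^{(d-1)/2}. -/
theorem boundary_case_one (d : ℕ) (hd : 3 ≤ d) (a b : ℝ) (ha : a ∈ Set.Ioo (0 : ℝ) 1)
    (hb : 0 ≤ b) (hnorm : a ^ 2 + b ^ 2 * d = 1)
    (hblow : b > (Real.sqrt d - a * Real.sqrt ((d : ℝ) - 1)) / d) :
    (1 / (d : ℝ) ^ ((d : ℝ) / 2)) *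
        (a * ((d : ℝ) - 1) ^ ((d : ℝ) / 2) + b * d * ((d : ℝ) - 1) ^ (((d : ℝ) - 1) / 2)) >
      (((d : ℝ) - 1) / d) ^ (((d : ℝ) - 1) / 2) := by
  have hD : (3 : ℝ) ≤ (d : ℝ) := by exact_mod_cast hd
  set D := (d : ℝ) with hDdef
  have hD0 : 0 < D := by linarith
  have hD1 : 0 < D - 1 := by linarith
  -- key inequality
  have key : Real.sqrt D < a * Real.sqrt (D - 1) + b * D := by
    have := (div_lt_iff₀ hD0).mp hblow
    linarith
  have hsD : 0 < Real.sqrt D := Real.sqrt_pos.mpr hD0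
  have hsD1 : 0 < Real.sqrt (D - 1) := Real.sqrt_pos.mpr hD1
  have hP : 0 < (D - 1) ^ ((D - 1) / 2) := Real.rpow_pos_of_pos hD1 _
  have hQ : 0 < D ^ ((D - 1) / 2) := Real.rpow_pos_of_pos hD0 _
  have h1 : (D - 1) ^ (D / 2) = (D - 1) ^ ((D - 1) / 2) * Real.sqrt (D - 1) := by
    rw [Real.sqrt_eq_rpow, ← Real.rpow_add hD1]
    ring_nf
  have h2 : D ^ (D / 2) = D ^ ((D - 1) / 2) * Real.sqrt D := by
    rw [Real.sqrt_eq_rpow, ← Real.rpow_add hD0]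
    ring_nf
  have h3 : ((D - 1) / D) ^ ((D - 1) / 2) = (D - 1) ^ ((D - 1) / 2) / D ^ ((D - 1) / 2) :=
    Real.div_rpow (le_of_lt hD1) (le_of_lt hD0) _
  rw [h1, h2, h3, gt_iff_lt]
  have heq : 1 / (D ^ ((D - 1) / 2) * Real.sqrt D) *
      (a * ((D - 1) ^ ((D - 1) / 2) * Real.sqrt (D - 1)) + b * D * (D - 1) ^ ((D - 1) / 2)) =
      (D - 1) ^ ((D - 1) / 2) * ((a * Real.sqrt (D - 1) + b * D) / Real.sqrt D) /
        D ^ ((D - 1) / 2) := by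
    field_simp
  rw [heq, div_lt_div_iff_of_pos_right hQ]
  have hX : 1 < (a * Real.sqrt (D - 1) + b * D) / Real.sqrt D :=
    (one_lt_div hsD).mpr key
  nlinarith [mul_lt_mul_of_pos_left hX hP]
end

section
/- Let d ≥ 2, let α > β > 0, and let u, v ∈ ℝⁿ be distinct unit vectors with ⟨u,v⟩ ≥ 0. If w is a maximizer of |α⟨u,w⟩^d - β⟨v,w⟩^d| over vectors w with ‖w‖ = c > 0, then |⟨u,w⟩| ≥ |⟨v,w⟩|. -/
open RealInnerProductSpace

theorem maximizer_location (d n : ℕ) (hd : 2 ≤ d) (α β : ℝ) (hαβ : β < α) (hβ : 0 < β)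
    (u v : EuclideanSpace ℝ (Fin n)) (huv : u ≠ v) (hu : ‖u‖ = 1) (hv : ‖v‖ = 1)
    (hip : 0 ≤ ⟪u, v⟫) (c : ℝ) (hc : 0 < c) (w : EuclideanSpace ℝ (Fin n)) (hw : ‖w‖ = c)
    (hmax : ∀ w' : EuclideanSpace ℝ (Fin n), ‖w'‖ = c →
      |α * ⟪u, w'⟫ ^ d - β * ⟪v, w'⟫ ^ d| ≤ |α * ⟪u, w⟫ ^ d - β * ⟪v, w⟫ ^ d|) :
    |⟪u, w⟫| ≥ |⟪v, w⟫| := by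
  by_contra h
  push_neg at h
  set a := ⟪u, w⟫ with ha
  set b := ⟪v, w⟫ with hb
  set k := ⟪u, v⟫ with hk
  have hN : ‖u - v‖ ^ 2 = 2 - 2 * k := by
    rw [norm_sub_sq_real, hu, hv]; ring
  have hNpos : (0:ℝ) < 2 - 2 * k := by
    rw [← hN]
    exact pow_pos (norm_pos_iff.mpr (sub_ne_zero.mpr huv)) 2
  set w' : EuclideanSpace ℝ (Fin n) := w - ((2 * (a - b) / (2 - 2 * k)) • (u - v)) with hw'
  have huuv : ⟪u, u - v⟫ = 1 - k := by
    rw [inner_sub_right, real_inner_self_eq_norm_sq, hu]; ring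
  have hvuv : ⟪v, u - v⟫ = k - 1 := by
    rw [inner_sub_right, real_inner_self_eq_norm_sq, hv, real_inner_comm]; ring
  have hwuv : ⟪w, u - v⟫ = a - b := by
    rw [inner_sub_right, ha, hb]
    simp [real_inner_comm w]
  have hfold : 2 * (a - b) / (2 - 2 * k) * (1 - k) = a - b := by
    rw [div_mul_eq_mul_div, div_eq_iff hNpos.ne']; ring
  have hiu : ⟪u, w'⟫ = b := by
    rw [hw', inner_sub_right, real_inner_smul_right, huuv, ← ha, hfold]; ring
  have hiv : ⟪v, w'⟫ = a := by
    rw [hw', inner_sub_right, real_inner_smul_right, hvuv, ← hb]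
    have : 2 * (a - b) / (2 - 2 * k) * (k - 1) = -(a - b) := by
      rw [div_mul_eq_mul_div, div_eq_iff hNpos.ne']; ring
    rw [this]; ring
  have hnw' : ‖w'‖ = c := by
    have h1 : ‖w'‖ ^ 2 = c ^ 2 := by
      rw [hw', norm_sub_sq_real, real_inner_smul_right, hwuv, norm_smul, mul_pow, hw]
      have h2 : ‖(2 * (a - b) / (2 - 2 * k))‖ ^ 2 = (2 * (a - b) / (2 - 2 * k)) ^ 2 := by
        rw [Real.norm_eq_abs, sq_abs]
      rw [h2, hN]
      have h3 : (2 * (a - b) / (2 - 2 * k)) ^ 2 * (2 - 2 * k)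
          = 2 * (a - b) / (2 - 2 * k) * (2 * (a - b)) := by
        rw [pow_two, mul_assoc, div_mul_cancel₀ _ hNpos.ne']
      rw [h3]; ring
    have h2 : (‖w'‖ - c) * (‖w'‖ + c) = 0 := by linear_combination h1
    rcases mul_eq_zero.mp h2 with h3 | h3
    · linarith
    · nlinarith [norm_nonneg w']
  have hkey := hmax w' hnw'
  rw [hiu, hiv] at hkey
  have habs : |a ^ d| < |b ^ d| := by
    rw [abs_pow, abs_pow]
    exact pow_lt_pow_left₀ h (abs_nonneg a) (by omega)
  have hsq : (a ^ d) ^ 2 < (b ^ d) ^ 2 := by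
    rw [← sq_abs (a ^ d), ← sq_abs (b ^ d)]
    exact pow_lt_pow_left₀ habs (abs_nonneg _) (by norm_num)
  have hsq2 : (α * b ^ d - β * a ^ d) ^ 2 ≤ (α * a ^ d - β * b ^ d) ^ 2 := by
    rw [← sq_abs (α * b ^ d - β * a ^ d), ← sq_abs (α * a ^ d - β * b ^ d)]
    exact pow_le_pow_left₀ (abs_nonneg _) hkey 2
  nlinarith [mul_pos (mul_pos (sub_pos.mpr hαβ) (by linarith : (0:ℝ) < α + β))
    (sub_pos.mpr hsq), hsq2]
end

section
/- Let d ≥ 2, α > β > 0, and let u, v ∈ ℝ² (or ℝⁿ) be distinct unit vectors with ⟨u,v⟩ ≥ 0. Then the function w ↦ α⟨u,w⟩^d - β⟨v,w⟩^d on the unit sphere has exactly one pair ±w* of global maximizers of its absolute value; equivalently, the tensor A = αu^{⊗d} - βv^{⊗d} has exactly one best symmetric rank-one approximation. -/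
/-!
Write `v = cos γ • u - sin γ • e` with `e` a unit vector orthogonal to `u` and `0 < γ ≤ π / 2`.
Then `α⟪u, w⟫ ^ d - β⟪v, w⟫ ^ d` depends only on the coordinates `(x, y) = (⟪u, w⟫, ⟪e, w⟫)`,
which fill the unit disk as `w` runs over the sphere, and it is homogeneous of degree `d` in them.
So everything reduces to showing that `F t = α cos t ^ d - β cos (t + γ) ^ d` has a unique
maximizer of `|F|` modulo `π`. Every maximizer in `[-π/2, π/2]` lies in `[0, π/2 - γ]`: on
`[-π/2, -γ]` the reflection `t ↦ -γ - t`, which swaps the two cosines, strictly increases `|F|`;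
on `(-γ, 0)` the derivative of `F` has no zero; and on `(π/2 - γ, π/2]` we have
`|F t| < α sin γ ^ d = F (π/2 - γ)` because `sin x ^ d + sin y ^ d ≤ sin (x + y) ^ d` for
`x, y ≥ 0`, `x + y ≤ π/2` and `d ≥ 2`. On `[0, π/2 - γ]` the critical point equation
`α cos t ^ (d-1) sin t = β cos (t + γ) ^ (d-1) sin (t + γ)` has at most one solution, because the
ratio of its two sides is strictly monotone.
-/

open Real Set RealInnerProductSpace

lemma sin_sq_add_sin_sq_le {x y : ℝ} (hx : 0 ≤ x) (hy : 0 ≤ y) (hxy : x + y ≤ π / 2) :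
    sin x ^ 2 + sin y ^ 2 ≤ sin (x + y) ^ 2 := by
  have hdiff : sin (x + y) ^ 2 - sin x ^ 2 - sin y ^ 2 = 2 * sin x * sin y * cos (x + y) := by
    rw [sin_add, cos_add]
    linear_combination sin x ^ 2 * sin_sq_add_cos_sq y + sin y ^ 2 * sin_sq_add_cos_sq x
  have := mul_nonneg (mul_nonneg (sin_nonneg_of_nonneg_of_le_pi hx (by linarith [pi_pos]))
    (sin_nonneg_of_nonneg_of_le_pi hy (by linarith [pi_pos])))
    (cos_nonneg_of_mem_Icc ⟨by linarith [pi_pos], hxy⟩)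
  nlinarith

lemma pow_add_pow_le_pow_of_sq_add_sq_le {a b c : ℝ} {d : ℕ} (ha : 0 ≤ a) (hb : 0 ≤ b)
    (hc : 0 ≤ c) (h : a ^ 2 + b ^ 2 ≤ c ^ 2) (hd : 2 ≤ d) : a ^ d + b ^ d ≤ c ^ d := by
  obtain ⟨k, rfl⟩ := Nat.exists_eq_add_of_le' hd
  have hac : a ≤ c := by nlinarith
  have hbc : b ≤ c := by nlinarith
  calc a ^ (k + 2) + b ^ (k + 2) = a ^ 2 * a ^ k + b ^ 2 * b ^ k := by ring
    _ ≤ a ^ 2 * c ^ k + b ^ 2 * c ^ k := by gcongr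
    _ = (a ^ 2 + b ^ 2) * c ^ k := by ring
    _ ≤ c ^ 2 * c ^ k := by gcongr
    _ = c ^ (k + 2) := by ring

lemma abs_sub_pow_lt {d : ℕ} {α β a b : ℝ} (hd : d ≠ 0) (hβ : 0 ≤ β) (hαβ : β < α) (ha : 0 ≤ a)
    (hab : a < b) : |α * a ^ d - β * b ^ d| < α * b ^ d - β * a ^ d := by
  have hpow : a ^ d < b ^ d := pow_lt_pow_left₀ hab ha hd
  have ha' : 0 ≤ a ^ d := pow_nonneg ha d
  rw [abs_sub_lt_iff]
  constructor <;> nlinarith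

lemma exists_signed_polar (x y : ℝ) :
    ∃ ρ, ∃ t ∈ Icc (-(π / 2)) (π / 2), x = ρ * cos t ∧ y = ρ * sin t := by
  have polar : ∀ z : ℂ, 0 ≤ z.re → ∃ t ∈ Icc (-(π / 2)) (π / 2),
      z.re = ‖z‖ * cos t ∧ z.im = ‖z‖ * sin t := fun z hz =>
    ⟨z.arg, abs_le.mp (Complex.abs_arg_le_pi_div_two_iff.mpr hz),
      (Complex.norm_mul_cos_arg z).symm, (Complex.norm_mul_sin_arg z).symm⟩
  rcases le_total 0 x with hx | hx
  · obtain ⟨t, ht, h⟩ := polar ⟨x, y⟩ hx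
    exact ⟨_, t, ht, h⟩
  · obtain ⟨t, ht, h₁, h₂⟩ := polar ⟨-x, -y⟩ (neg_nonneg.mpr hx)
    exact ⟨-‖(⟨-x, -y⟩ : ℂ)‖, t, ht, by linarith [h₁], by linarith [h₂]⟩

/-- The form `w ↦ α⟪u, w⟫ ^ d - β⟪v, w⟫ ^ d` in the coordinates `x = ⟪u, w⟫`, `y = ⟪e, w⟫`,
where `v = cos γ • u - sin γ • e`. -/
noncomputable def planeForm (d : ℕ) (α β γ x y : ℝ) : ℝ :=
  α * x ^ d - β * (x * cos γ - y * sin γ) ^ d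

noncomputable def circleForm (d : ℕ) (α β γ t : ℝ) : ℝ :=
  α * cos t ^ d - β * cos (t + γ) ^ d

noncomputable def cosPowMulSin (d : ℕ) (t : ℝ) : ℝ :=
  cos t ^ (d - 1) * sin t

section

variable {d : ℕ} {α β γ : ℝ}

lemma planeForm_cos_sin (t : ℝ) : planeForm d α β γ (cos t) (sin t) = circleForm d α β γ t := by
  rw [planeForm, circleForm, cos_add]

lemma planeForm_mul (r x y : ℝ) :
    planeForm d α β γ (r * x) (r * y) = r ^ d * planeForm d α β γ x y := by
  have : r * x * cos γ - r * y * sin γ = r * (x * cos γ - y * sin γ) := by ring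
  rw [planeForm, planeForm, this, mul_pow, mul_pow]
  ring

lemma abs_planeForm_mul_cos_sin (ρ t : ℝ) :
    |planeForm d α β γ (ρ * cos t) (ρ * sin t)| = |ρ| ^ d * |circleForm d α β γ t| := by
  rw [planeForm_mul, planeForm_cos_sin, abs_mul, abs_pow]

lemma hasDerivAt_circleForm (t : ℝ) :
    HasDerivAt (circleForm d α β γ)
      (d * (β * cosPowMulSin d (t + γ) - α * cosPowMulSin d t)) t := by
  have h₁ : HasDerivAt (fun s => cos s ^ d) (d * cos t ^ (d - 1) * -sin t) t :=
    (hasDerivAt_cos t).pow d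
  have h₂ : HasDerivAt (fun s => cos (s + γ) ^ d) (d * cos (t + γ) ^ (d - 1) * -sin (t + γ)) t :=
    (((hasDerivAt_id t).add_const γ).cos.congr_deriv (mul_one _)).pow d
  exact ((h₁.const_mul α).sub (h₂.const_mul β)).congr_deriv
    (by rw [cosPowMulSin, cosPowMulSin]; ring)

lemma cosPowMulSin_pos {t : ℝ} (h₀ : 0 < t) (h₁ : t < π / 2) : 0 < cosPowMulSin d t :=
  mul_pos (pow_pos (cos_pos_of_mem_Ioo ⟨by linarith, h₁⟩) _)
    (sin_pos_of_pos_of_lt_pi h₀ (by linarith [pi_pos]))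

lemma cosPowMulSin_neg (t : ℝ) : cosPowMulSin d (-t) = -cosPowMulSin d t := by
  simp [cosPowMulSin]

lemma mul_cosPowMulSin_eq_of_abs_le {t : ℝ} (hd : d ≠ 0)
    (hmax : ∀ s, |circleForm d α β γ s| ≤ |circleForm d α β γ t|) :
    α * cosPowMulSin d t = β * cosPowMulSin d (t + γ) := by
  have hextr : IsLocalExtr (circleForm d α β γ) t := by
    rcases le_total 0 (circleForm d α β γ t) with h | h
    · refine .inr (Filter.Eventually.of_forall fun s => ?_)
      have := (abs_le.mp (hmax s)).2
      rwa [abs_of_nonneg h] at this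
    · refine .inl (Filter.Eventually.of_forall fun s => ?_)
      have := (abs_le.mp (hmax s)).1
      rwa [abs_of_nonpos h, neg_neg] at this
  have hderiv := hextr.hasDerivAt_eq_zero (hasDerivAt_circleForm t)
  rw [mul_eq_zero, sub_eq_zero] at hderiv
  exact (hderiv.resolve_left (Nat.cast_ne_zero.mpr hd)).symm

lemma mul_cosPowMulSin_ne {t : ℝ} (hα : 0 < α) (hβ : 0 < β) (hγ : γ ≤ π / 2) (ht₁ : -γ < t)
    (ht₂ : t < 0) : α * cosPowMulSin d t ≠ β * cosPowMulSin d (t + γ) := by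
  have h₁ : 0 < cosPowMulSin d (-t) := cosPowMulSin_pos (by linarith) (by linarith)
  have h₂ : 0 < cosPowMulSin d (t + γ) := cosPowMulSin_pos (by linarith) (by linarith)
  rw [cosPowMulSin_neg] at h₁
  nlinarith

/-- `t ↦ cosPowMulSin d (t + γ) / cosPowMulSin d t` is strictly decreasing, cross-multiplied. -/
lemma cosPowMulSin_add_mul_lt {a b : ℝ} (hγ : 0 < γ) (ha : 0 ≤ a) (hab : a < b)
    (hb : b + γ ≤ π / 2) :
    cosPowMulSin d (b + γ) * cosPowMulSin d a < cosPowMulSin d (a + γ) * cosPowMulSin d b := by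
  have hsin : 0 < sin γ * sin (b - a) :=
    mul_pos (sin_pos_of_pos_of_lt_pi hγ (by linarith [pi_pos]))
      (sin_pos_of_pos_of_lt_pi (by linarith) (by linarith [pi_pos]))
  have hcos : cos (b + γ) * cos a < cos (a + γ) * cos b := by
    have : cos (a + γ) * cos b - cos (b + γ) * cos a = sin γ * sin (b - a) := by
      simp only [cos_add, sin_sub]; ring
    linarith
  have hsin' : sin (b + γ) * sin a < sin (a + γ) * sin b := by
    have : sin (a + γ) * sin b - sin (b + γ) * sin a = sin γ * sin (b - a) := by
      simp only [sin_add, sin_sub]; ring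
    linarith
  have hcos_nonneg : 0 ≤ cos (b + γ) * cos a :=
    mul_nonneg (cos_nonneg_of_mem_Icc ⟨by linarith [pi_pos], hb⟩)
      (cos_nonneg_of_mem_Icc ⟨by linarith [pi_pos], by linarith⟩)
  have hsin_nonneg : 0 ≤ sin (b + γ) * sin a :=
    mul_nonneg (sin_nonneg_of_nonneg_of_le_pi (by linarith) (by linarith [pi_pos]))
      (sin_nonneg_of_nonneg_of_le_pi ha (by linarith [pi_pos]))
  calc cosPowMulSin d (b + γ) * cosPowMulSin d a
      = (cos (b + γ) * cos a) ^ (d - 1) * (sin (b + γ) * sin a) := by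
        rw [cosPowMulSin, cosPowMulSin, mul_pow]; ring
    _ < (cos (a + γ) * cos b) ^ (d - 1) * (sin (a + γ) * sin b) :=
        mul_lt_mul' (pow_le_pow_left₀ hcos_nonneg hcos.le _) hsin' hsin_nonneg
          (pow_pos (hcos_nonneg.trans_lt hcos) _)
    _ = cosPowMulSin d (a + γ) * cosPowMulSin d b := by
        rw [cosPowMulSin, cosPowMulSin, mul_pow]; ring

lemma eq_of_mul_cosPowMulSin_eq {a b : ℝ} (hβ : β ≠ 0) (hγ : 0 < γ)
    (ha : a ∈ Icc 0 (π / 2 - γ)) (hb : b ∈ Icc 0 (π / 2 - γ))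
    (hca : α * cosPowMulSin d a = β * cosPowMulSin d (a + γ))
    (hcb : α * cosPowMulSin d b = β * cosPowMulSin d (b + γ)) : a = b := by
  wlog hab : a ≤ b generalizing a b
  · exact (this hb ha hcb hca (le_of_not_ge hab)).symm
  refine hab.eq_of_not_lt fun hlt => ?_
  have hcross := cosPowMulSin_add_mul_lt (d := d) hγ ha.1 hlt (by linarith [hb.2])
  have : β * (cosPowMulSin d (a + γ) * cosPowMulSin d b
      - cosPowMulSin d (b + γ) * cosPowMulSin d a) = 0 := by
    linear_combination cosPowMulSin d a * hcb - cosPowMulSin d b * hca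
  exact (sub_ne_zero.mpr hcross.ne').elim ((mul_eq_zero.mp this).resolve_left hβ)

lemma circleForm_pi_div_two_sub (hd : d ≠ 0) :
    circleForm d α β γ (π / 2 - γ) = α * sin γ ^ d := by
  rw [circleForm, cos_pi_div_two_sub, sub_add_cancel, cos_pi_div_two, zero_pow hd, mul_zero,
    sub_zero]

lemma abs_circleForm_lt_of_le_neg {t : ℝ} (hd : d ≠ 0) (hβ : 0 < β) (hαβ : β < α) (hγ : 0 < γ)
    (ht₁ : -(π / 2) ≤ t) (ht₂ : t ≤ -γ) :
    |circleForm d α β γ t| < circleForm d α β γ (-γ - t) := by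
  have hlt : cos t < cos (t + γ) := by
    rw [← cos_neg t, ← cos_neg (t + γ)]
    exact strictAntiOn_cos ⟨by linarith, by linarith [pi_pos]⟩ ⟨by linarith, by linarith⟩
      (by linarith)
  have hrefl : circleForm d α β γ (-γ - t) = α * cos (t + γ) ^ d - β * cos t ^ d := by
    rw [circleForm, show -γ - t = -(t + γ) by ring, cos_neg, show -(t + γ) + γ = -t by ring,
      cos_neg]
  rw [hrefl]
  exact abs_sub_pow_lt hd hβ.le hαβ (cos_nonneg_of_mem_Icc ⟨ht₁, by linarith⟩) hlt

lemma abs_circleForm_lt_of_gt {t : ℝ} (hd : 2 ≤ d) (hβ : 0 < β) (hαβ : β < α) (hγ : γ ≤ π / 2)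
    (ht₁ : π / 2 - γ < t) (ht₂ : t ≤ π / 2) :
    |circleForm d α β γ t| < circleForm d α β γ (π / 2 - γ) := by
  set x := π / 2 - t with hx_def
  set y := t + γ - π / 2 with hy_def
  have hx : 0 ≤ x := by linarith
  have hy₀ : 0 < y := by linarith
  have hy : 0 < sin y := sin_pos_of_pos_of_lt_pi hy₀ (by linarith [pi_pos])
  have hcos₁ : cos t = sin x := (sin_pi_div_two_sub t).symm
  have hcos₂ : cos (t + γ) = -sin y := by
    rw [← cos_add_pi_div_two]; congr 1; ring
  have hsum : sin x ^ d + sin y ^ d ≤ sin γ ^ d := by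
    have hxy : x + y = γ := by ring
    have := sin_sq_add_sin_sq_le hx hy₀.le (by linarith)
    rw [hxy] at this
    exact pow_add_pow_le_pow_of_sq_add_sq_le (sin_nonneg_of_nonneg_of_le_pi
      hx (by linarith [pi_pos])) hy.le (sin_nonneg_of_nonneg_of_le_pi
      (by linarith) (by linarith [pi_pos])) this hd
  calc |circleForm d α β γ t| ≤ α * sin x ^ d + β * sin y ^ d := by
        refine (abs_sub _ _).trans_eq ?_
        rw [hcos₁, hcos₂, abs_mul, abs_mul, abs_pow, abs_pow, abs_neg,
          abs_of_pos (hβ.trans hαβ), abs_of_pos hβ, abs_of_pos hy,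
          abs_of_nonneg (sin_nonneg_of_nonneg_of_le_pi hx (by linarith [pi_pos]))]
    _ < α * sin x ^ d + α * sin y ^ d := by gcongr
    _ ≤ α * sin γ ^ d := by rw [← mul_add]; gcongr; linarith
    _ = _ := (circleForm_pi_div_two_sub (by omega)).symm

lemma mem_Icc_of_abs_circleForm_le {t : ℝ} (hd : 2 ≤ d) (hβ : 0 < β) (hαβ : β < α)
    (hγ₀ : 0 < γ) (hγ : γ ≤ π / 2) (ht : t ∈ Icc (-(π / 2)) (π / 2))
    (hmax : ∀ s, |circleForm d α β γ s| ≤ |circleForm d α β γ t|) : t ∈ Icc 0 (π / 2 - γ) := by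
  rcases le_or_gt t (-γ) with h₁ | h₁
  · exact absurd (hmax _) (not_le.mpr ((abs_circleForm_lt_of_le_neg (by omega) hβ hαβ hγ₀
      ht.1 h₁).trans_le (le_abs_self _)))
  rcases lt_or_ge t 0 with h₂ | h₂
  · exact absurd (mul_cosPowMulSin_eq_of_abs_le (by omega) hmax)
      (mul_cosPowMulSin_ne (hβ.trans hαβ) hβ hγ h₁ h₂)
  refine ⟨h₂, not_lt.mp fun h₃ => ?_⟩
  exact absurd (hmax _) (not_le.mpr ((abs_circleForm_lt_of_gt hd hβ hαβ hγ h₃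
      ht.2).trans_le (le_abs_self _)))

lemma exists_mem_Icc_abs_circleForm_eq (s : ℝ) :
    ∃ t ∈ Icc (-(π / 2)) (π / 2), |circleForm d α β γ s| = |circleForm d α β γ t| := by
  obtain ⟨ρ, t, ht, hcos, hsin⟩ := exists_signed_polar (cos s) (sin s)
  have hρ : |ρ| = 1 := by
    have := sin_sq_add_cos_sq s
    rw [hcos, hsin, mul_pow, mul_pow, ← mul_add, sin_sq_add_cos_sq, mul_one, ← sq_abs] at this
    exact (pow_eq_one_iff_of_nonneg (abs_nonneg ρ) two_ne_zero).mp this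
  refine ⟨t, ht, ?_⟩
  rw [← planeForm_cos_sin, hcos, hsin, abs_planeForm_mul_cos_sin, hρ, one_pow, one_mul]

theorem exists_max_abs_circleForm (hd : 2 ≤ d) (hβ : 0 < β) (hαβ : β < α) (hγ₀ : 0 < γ)
    (hγ : γ ≤ π / 2) :
    ∃ t₀, 0 < |circleForm d α β γ t₀| ∧ (∀ t, |circleForm d α β γ t| ≤ |circleForm d α β γ t₀|) ∧
      ∀ t ∈ Icc (-(π / 2)) (π / 2), |circleForm d α β γ t| = |circleForm d α β γ t₀| → t = t₀ := by
  have hcont : Continuous fun t => |circleForm d α β γ t| := by unfold circleForm; fun_prop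
  obtain ⟨t₀, ht₀, hmaxOn⟩ := (isCompact_Icc (a := -(π / 2)) (b := π / 2)).exists_isMaxOn
    (nonempty_Icc.mpr (by linarith [pi_pos])) hcont.continuousOn
  have hmax : ∀ t, |circleForm d α β γ t| ≤ |circleForm d α β γ t₀| := fun s => by
    obtain ⟨t, ht, hst⟩ := exists_mem_Icc_abs_circleForm_eq (d := d) (α := α) (β := β) (γ := γ) s
    exact hst ▸ hmaxOn ht
  refine ⟨t₀, ?_, hmax, fun t ht heq => ?_⟩
  · calc (0 : ℝ) < α * sin γ ^ d := mul_pos (hβ.trans hαβ)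
          (pow_pos (sin_pos_of_pos_of_lt_pi hγ₀ (by linarith [pi_pos])) d)
      _ = circleForm d α β γ (π / 2 - γ) := (circleForm_pi_div_two_sub (by omega)).symm
      _ ≤ _ := (le_abs_self _).trans (hmax _)
  · have hmax' : ∀ s, |circleForm d α β γ s| ≤ |circleForm d α β γ t| := heq ▸ hmax
    exact eq_of_mul_cosPowMulSin_eq hβ.ne' hγ₀
      (mem_Icc_of_abs_circleForm_le hd hβ hαβ hγ₀ hγ ht hmax')
      (mem_Icc_of_abs_circleForm_le hd hβ hαβ hγ₀ hγ ht₀ hmax)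
      (mul_cosPowMulSin_eq_of_abs_le (by omega) hmax')
      (mul_cosPowMulSin_eq_of_abs_le (by omega) hmax)

theorem exists_max_abs_planeForm {d : ℕ} {α β γ : ℝ} (hd : 2 ≤ d) (hβ : 0 < β) (hαβ : β < α)
    (hγ₀ : 0 < γ) (hγ : γ ≤ π / 2) :
    ∃ x₀ y₀ : ℝ, x₀ ^ 2 + y₀ ^ 2 = 1 ∧
      (∀ x y, x ^ 2 + y ^ 2 ≤ 1 → |planeForm d α β γ x y| ≤ |planeForm d α β γ x₀ y₀|) ∧
      ∀ x y, x ^ 2 + y ^ 2 ≤ 1 → |planeForm d α β γ x y| = |planeForm d α β γ x₀ y₀| →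
        (x = x₀ ∧ y = y₀) ∨ (x = -x₀ ∧ y = -y₀) := by
  obtain ⟨t₀, hpos, hmax, huniq⟩ := exists_max_abs_circleForm hd hβ hαβ hγ₀ hγ
  have polar : ∀ x y, x ^ 2 + y ^ 2 ≤ 1 → ∃ ρ, |ρ| ≤ 1 ∧ ∃ t ∈ Icc (-(π / 2)) (π / 2),
      x = ρ * cos t ∧ y = ρ * sin t := by
    intro x y hxy
    obtain ⟨ρ, t, ht, rfl, rfl⟩ := exists_signed_polar x y
    refine ⟨ρ, ?_, t, ht, rfl, rfl⟩
    rwa [mul_pow, mul_pow, ← mul_add, cos_sq_add_sin_sq, mul_one, sq_le_one_iff_abs_le_one] at hxy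
  refine ⟨cos t₀, sin t₀, cos_sq_add_sin_sq t₀, fun x y hxy => ?_, fun x y hxy heq => ?_⟩
  · obtain ⟨ρ, hρ, t, -, rfl, rfl⟩ := polar x y hxy
    rw [abs_planeForm_mul_cos_sin, planeForm_cos_sin]
    exact (mul_le_of_le_one_left (abs_nonneg _) (pow_le_one₀ (abs_nonneg ρ) hρ)).trans (hmax t)
  · obtain ⟨ρ, hρ, t, ht, rfl, rfl⟩ := polar x y hxy
    rw [abs_planeForm_mul_cos_sin, planeForm_cos_sin] at heq
    have hρd : |ρ| ^ d = 1 := by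
      refine le_antisymm (pow_le_one₀ (abs_nonneg ρ) hρ) (not_lt.mp fun hlt => ?_)
      have := mul_le_mul_of_nonneg_left (hmax t) (pow_nonneg (abs_nonneg ρ) d)
      nlinarith
    have ht₀ : t = t₀ := huniq t ht (by rwa [hρd, one_mul] at heq)
    rcases (abs_eq zero_le_one).mp ((pow_eq_one_iff_of_nonneg (abs_nonneg ρ) (by omega)).mp hρd)
      with rfl | rfl <;> simp [ht₀]

end

section

variable {E : Type*} [NormedAddCommGroup E] [InnerProductSpace ℝ E]

lemma exists_eq_cos_smul_sub_sin_smul {u v : E} (huv : u ≠ v) (hu : ‖u‖ = 1) (hv : ‖v‖ = 1)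
    (hip : 0 ≤ ⟪u, v⟫) :
    ∃ γ ∈ Ioc 0 (π / 2), ∃ e : E, ‖e‖ = 1 ∧ ⟪u, e⟫ = 0 ∧ v = cos γ • u - sin γ • e := by
  set c := ⟪u, v⟫
  have hc : c < 1 := lt_of_le_of_ne ((real_inner_le_norm u v).trans (by simp [hu, hv]))
    fun h => huv ((inner_eq_one_iff_of_norm_eq_one hu hv).mp h)
  set γ := arccos c
  have hcos : cos γ = c := cos_arccos (by linarith) hc.le
  have hsin : 0 < sin γ := sin_arccos c ▸ sqrt_pos.mpr (by nlinarith)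
  have huu : ⟪u, u⟫ = 1 := by rw [real_inner_self_eq_norm_sq, hu, one_pow]
  have hvv : ⟪v, v⟫ = 1 := by rw [real_inner_self_eq_norm_sq, hv, one_pow]
  refine ⟨γ, ⟨arccos_pos.mpr hc, arccos_le_pi_div_two.mpr hip⟩,
    (sin γ)⁻¹ • (cos γ • u - v), ?_, ?_, ?_⟩
  · rw [← pow_eq_one_iff_of_nonneg (norm_nonneg _) two_ne_zero, ← real_inner_self_eq_norm_sq]
    simp only [real_inner_smul_left, real_inner_smul_right, inner_sub_left, inner_sub_right,
      huu, hvv, real_inner_comm u v, hcos]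
    have hs : sin γ ^ 2 = 1 - c ^ 2 := by rw [sin_sq, hcos]
    field_simp
    linear_combination -hs
  · rw [inner_smul_right, inner_sub_right, inner_smul_right, huu, hcos, mul_one, sub_self, mul_zero]
  · rw [smul_inv_smul₀ hsin.ne']
    abel

lemma norm_sub_inner_smul_add_inner_smul_sq {u e : E} (hu : ‖u‖ = 1) (he : ‖e‖ = 1)
    (hue : ⟪u, e⟫ = 0) (w : E) :
    ‖w - (⟪u, w⟫ • u + ⟪e, w⟫ • e)‖ ^ 2 = ‖w‖ ^ 2 - ⟪u, w⟫ ^ 2 - ⟪e, w⟫ ^ 2 := by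
  have huu : ⟪u, u⟫ = 1 := by rw [real_inner_self_eq_norm_sq, hu, one_pow]
  have hee : ⟪e, e⟫ = 1 := by rw [real_inner_self_eq_norm_sq, he, one_pow]
  rw [← real_inner_self_eq_norm_sq, ← real_inner_self_eq_norm_sq]
  have heu : ⟪e, u⟫ = 0 := by rw [real_inner_comm, hue]
  simp only [inner_sub_left, inner_sub_right, inner_add_left, inner_add_right,
    real_inner_smul_left, real_inner_smul_right, huu, hee, hue, heu,
    real_inner_comm w u, real_inner_comm w e]
  ring

lemma inner_sq_add_inner_sq_le {u e : E} (hu : ‖u‖ = 1) (he : ‖e‖ = 1) (hue : ⟪u, e⟫ = 0)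
    (w : E) : ⟪u, w⟫ ^ 2 + ⟪e, w⟫ ^ 2 ≤ ‖w‖ ^ 2 := by
  have := norm_sub_inner_smul_add_inner_smul_sq hu he hue w
  nlinarith [sq_nonneg ‖w - (⟪u, w⟫ • u + ⟪e, w⟫ • e)‖]

lemma eq_inner_smul_add_inner_smul {u e : E} (hu : ‖u‖ = 1) (he : ‖e‖ = 1) (hue : ⟪u, e⟫ = 0)
    {w : E} (hw : ⟪u, w⟫ ^ 2 + ⟪e, w⟫ ^ 2 = ‖w‖ ^ 2) : w = ⟪u, w⟫ • u + ⟪e, w⟫ • e := by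
  have := norm_sub_inner_smul_add_inner_smul_sq hu he hue w
  rw [← sub_eq_zero, ← norm_eq_zero, ← sq_eq_zero_iff, this]
  linarith

lemma inner_smul_add_smul {u e : E} (hu : ‖u‖ = 1) (he : ‖e‖ = 1) (hue : ⟪u, e⟫ = 0) (x y : ℝ) :
    ⟪u, x • u + y • e⟫ = x ∧ ⟪e, x • u + y • e⟫ = y := by
  have heu : ⟪e, u⟫ = 0 := by rw [real_inner_comm, hue]
  simp only [inner_add_right, real_inner_smul_right, real_inner_self_eq_norm_sq, hu, he, hue, heu]
  norm_num

lemma norm_smul_add_smul_sq {u e : E} (hu : ‖u‖ = 1) (he : ‖e‖ = 1) (hue : ⟪u, e⟫ = 0) (x y : ℝ) :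
    ‖x • u + y • e‖ ^ 2 = x ^ 2 + y ^ 2 := by
  obtain ⟨hx, hy⟩ := inner_smul_add_smul hu he hue x y
  have := norm_sub_inner_smul_add_inner_smul_sq hu he hue (x • u + y • e)
  rw [hx, hy, sub_self, norm_zero] at this
  linarith

lemma exists_max_on_sphere_of_max_on_disk {u e : E} (hu : ‖u‖ = 1) (he : ‖e‖ = 1)
    (hue : ⟪u, e⟫ = 0) {g : ℝ → ℝ → ℝ} {x₀ y₀ : ℝ} (h₀ : x₀ ^ 2 + y₀ ^ 2 = 1)
    (hmax : ∀ x y, x ^ 2 + y ^ 2 ≤ 1 → g x y ≤ g x₀ y₀)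
    (huniq : ∀ x y, x ^ 2 + y ^ 2 ≤ 1 → g x y = g x₀ y₀ → (x = x₀ ∧ y = y₀) ∨ (x = -x₀ ∧ y = -y₀)) :
    ∃ w₀ : E, ‖w₀‖ = 1 ∧ (∀ w : E, ‖w‖ = 1 → g ⟪u, w⟫ ⟪e, w⟫ ≤ g ⟪u, w₀⟫ ⟪e, w₀⟫) ∧
      ∀ w : E, ‖w‖ = 1 → g ⟪u, w⟫ ⟪e, w⟫ = g ⟪u, w₀⟫ ⟪e, w₀⟫ → w = w₀ ∨ w = -w₀ := by
  have hdisk : ∀ w : E, ‖w‖ = 1 → ⟪u, w⟫ ^ 2 + ⟪e, w⟫ ^ 2 ≤ 1 := fun w hw => by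
    simpa [hw] using inner_sq_add_inner_sq_le hu he hue w
  obtain ⟨hx₀, hy₀⟩ := inner_smul_add_smul hu he hue x₀ y₀
  refine ⟨x₀ • u + y₀ • e, ?_, fun w hw => ?_, fun w hw heq => ?_⟩
  · rw [← pow_eq_one_iff_of_nonneg (norm_nonneg _) two_ne_zero, norm_smul_add_smul_sq hu he hue,
      h₀]
  · rw [hx₀, hy₀]
    exact hmax _ _ (hdisk w hw)
  · rw [hx₀, hy₀] at heq
    have hw_eq : w = ⟪u, w⟫ • u + ⟪e, w⟫ • e := by
      refine eq_inner_smul_add_inner_smul hu he hue ?_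
      rcases huniq _ _ (hdisk w hw) heq with ⟨hx, hy⟩ | ⟨hx, hy⟩ <;>
        rw [hx, hy, hw] <;> simpa using h₀
    rw [hw_eq]
    rcases huniq _ _ (hdisk w hw) heq with ⟨hx, hy⟩ | ⟨hx, hy⟩
    · exact .inl (by rw [hx, hy])
    · exact .inr (by rw [hx, hy, neg_smul, neg_smul, neg_add])

end

theorem unique_best_rank_one (d n : ℕ) (hd : 2 ≤ d) (α β : ℝ) (hαβ : β < α) (hβ : 0 < β)
    (u v : EuclideanSpace ℝ (Fin n)) (huv : u ≠ v) (hu : ‖u‖ = 1) (hv : ‖v‖ = 1)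
    (hip : 0 ≤ ⟪u, v⟫) :
    ∃ w₀ : EuclideanSpace ℝ (Fin n), ‖w₀‖ = 1 ∧
      (∀ w : EuclideanSpace ℝ (Fin n), ‖w‖ = 1 →
        |α * ⟪u, w⟫ ^ d - β * ⟪v, w⟫ ^ d| ≤ |α * ⟪u, w₀⟫ ^ d - β * ⟪v, w₀⟫ ^ d|) ∧
      (∀ w : EuclideanSpace ℝ (Fin n), ‖w‖ = 1 →
        (∀ w' : EuclideanSpace ℝ (Fin n), ‖w'‖ = 1 →
          |α * ⟪u, w'⟫ ^ d - β * ⟪v, w'⟫ ^ d| ≤ |α * ⟪u, w⟫ ^ d - β * ⟪v, w⟫ ^ d|) →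
        w = w₀ ∨ w = -w₀) := by
  obtain ⟨γ, ⟨hγ₀, hγ⟩, e, he, hue, rfl⟩ := exists_eq_cos_smul_sub_sin_smul huv hu hv hip
  obtain ⟨x₀, y₀, h₀, hmax, huniq⟩ := exists_max_abs_planeForm hd hβ hαβ hγ₀ hγ
  obtain ⟨w₀, hw₀, hmax', huniq'⟩ := exists_max_on_sphere_of_max_on_disk hu he hue h₀ hmax huniq
  have hform : ∀ w, α * ⟪u, w⟫ ^ d - β * ⟪cos γ • u - sin γ • e, w⟫ ^ d =
      planeForm d α β γ ⟪u, w⟫ ⟪e, w⟫ := fun w => by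
    rw [planeForm, inner_sub_left, real_inner_smul_left, real_inner_smul_left, mul_comm (cos γ),
      mul_comm (sin γ)]
  simp only [hform]
  exact ⟨w₀, hw₀, hmax', fun w hw hw' => huniq' w hw ((hmax' w hw).antisymm (hw' w₀ hw₀))⟩
end

section
/- Let A ∈ ℝ^{2×2×2} be the tensor with slices [[1,0],[0,b]] and [[0,a],[c,d]]. If a²+b²+c²+d² + 2abc ≤ 1, |a|,|b|,|c| ≤ 1, and d² + 4abc > 0, then 1 + a² + b² + c² + d² < 9/4. -/
theorem hyperdet_frobenius (a b c d : ℝ)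
    (h1 : a ^ 2 + b ^ 2 + c ^ 2 + d ^ 2 + 2 * a * b * c ≤ 1)
    (ha : |a| ≤ 1) (hb : |b| ≤ 1) (hc : |c| ≤ 1)
    (hdet : d ^ 2 + 4 * a * b * c > 0) :
    1 + a ^ 2 + b ^ 2 + c ^ 2 + d ^ 2 < 9 / 4 := by
  by_contra h
  push_neg at h
  have habc : a * b * c ≤ -(1/8) := by nlinarith
  have hd2 : d ^ 2 > -(4 * (a * b * c)) := by nlinarith
  have hs : a ^ 2 + b ^ 2 + c ^ 2 < 3/4 := by nlinarith
  have hamgm : (a ^ 2 + b ^ 2 + c ^ 2) ^ 3 ≥ 27 * (a * b * c) ^ 2 := by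
    nlinarith [sq_nonneg (a^2 - b^2), sq_nonneg (b^2 - c^2), sq_nonneg (a^2 - c^2),
      sq_nonneg a, sq_nonneg b, sq_nonneg c, sq_nonneg (a*b - b*c), sq_nonneg (a*b - a*c),
      sq_nonneg (b*c - a*c), sq_nonneg (a*b*c)]
  nlinarith [sq_nonneg (a*b*c), sq_nonneg (a^2+b^2+c^2)]
end

section
/- Let d ≥ 3 and let W_d ∈ Sym_d(ℝ²) be d times the symmetrization of e₁^{⊗(d-1)}⊗e₂ (i.e., the sum over all d placements of e₂ among copies of e₁). Then ‖W_d‖_F² = d and ‖W_d‖_σ² / ‖W_d‖_F² = (1 - 1/d)^{d-1}, where ‖W_d‖_σ = max_{‖w‖=1} |⟨W_d, w^{⊗d}⟩_F|. -/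
/-!
The entries of `W_d` are the indicator of the multi-indices `Pi.single k 1`, so contracting `W_d`
against any function reduces to a sum over the `d` positions `k`. This gives `‖W_d‖_F² = d` and
`⟨W_d, w^{⊗d}⟩ = d · x^{d-1} y` for `w = (x, y)`. On the unit circle, weighted AM-GM applied to
`x²` (weight `d - 1`) and `y²` (weight `1`) bounds `(x²)^{d-1} y²` by `(1 - 1/d)^{d-1} / d`, with
equality at `x² = 1 - 1/d`, `y² = 1/d`.
-/

/-- The tensor `W_d = d·e₁^{d-1}e₂`, i.e. the sum over all `d` placements of `e₂`
among copies of `e₁`: its entry at a multi-index `i` is `1` if exactly one coordinate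
of `i` equals `1`, and `0` otherwise. -/
noncomputable def Wd (d : ℕ) : (Fin d → Fin 2) → ℝ :=
  fun i => if (Finset.univ.filter fun k => i k = 1).card = 1 then 1 else 0

open Finset

lemma filter_eq_one_eq_singleton_iff {d : ℕ} (i : Fin d → Fin 2) (k : Fin d) :
    ({j | i j = 1} : Finset (Fin d)) = {k} ↔ i = Pi.single k 1 := by
  simp only [Finset.ext_iff, funext_iff, mem_filter, mem_univ, true_and, mem_singleton]
  refine forall_congr' fun j => ?_
  rcases eq_or_ne j k with rfl | hjk
  · simp
  · generalize i j = x
    fin_cases x <;> simp [hjk]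

lemma pi_single_one_injective (d : ℕ) :
    Function.Injective fun k : Fin d => (Pi.single k 1 : Fin d → Fin 2) := by
  intro k k' h
  simpa [Pi.single_apply, eq_comm] using congrFun h k

lemma sum_Wd_mul {d : ℕ} (f : (Fin d → Fin 2) → ℝ) :
    ∑ i, Wd d i * f i = ∑ k : Fin d, f (Pi.single k 1) := by
  have hsupport : ({i | #{j | i j = 1} = 1} : Finset (Fin d → Fin 2)) =
      univ.image fun k => Pi.single k 1 := by
    ext i
    simp only [mem_filter, mem_univ, true_and, mem_image, card_eq_one,
      filter_eq_one_eq_singleton_iff]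
    exact exists_congr fun k => eq_comm
  simp only [Wd, ite_mul, one_mul, zero_mul]
  rw [← sum_filter, hsupport, sum_image fun k _ k' _ h => pi_single_one_injective d h]

lemma Wd_pi_single (d : ℕ) (k : Fin d) : Wd d (Pi.single k 1) = 1 :=
  if_pos (card_eq_one.mpr ⟨k, (filter_eq_one_eq_singleton_iff _ k).mpr rfl⟩)

lemma sum_Wd_sq (d : ℕ) : ∑ i, Wd d i ^ 2 = d := by
  simp [sq, sum_Wd_mul, Wd_pi_single]

lemma prod_comp_pi_single {M : Type*} [CommMonoid M] {d : ℕ} (k : Fin d) (w : Fin 2 → M) :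
    ∏ j, w ((Pi.single k 1 : Fin d → Fin 2) j) = w 0 ^ (d - 1) * w 1 := by
  rw [Fintype.prod_eq_mul_prod_compl k, mul_comm, Pi.single_eq_same,
    prod_congr rfl fun j hj => by rw [Pi.single_eq_of_ne (by simpa using hj)], prod_const,
    card_compl, card_singleton, Fintype.card_fin]

lemma sum_Wd_mul_prod (d : ℕ) (w : Fin 2 → ℝ) :
    ∑ i, Wd d i * ∏ k, w (i k) = d * (w 0 ^ (d - 1) * w 1) := by
  simp [sum_Wd_mul, prod_comp_pi_single]

lemma pow_mul_le_arith_mean_pow (n : ℕ) {x y : ℝ} (hx : 0 ≤ x) (hy : 0 ≤ y) :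
    x ^ n * y ≤ ((n * x + y) / (n + 1)) ^ (n + 1) := by
  have hgm := Real.geom_mean_le_arith_mean2_weighted (w₁ := n / (n + 1)) (w₂ := 1 / (n + 1))
    (by positivity) (by positivity) hx hy (by field_simp)
  calc x ^ n * y = (x ^ (n / (n + 1) : ℝ) * y ^ (1 / (n + 1) : ℝ)) ^ (n + 1) := by
        rw [mul_pow, ← Real.rpow_mul_natCast hx, ← Real.rpow_mul_natCast hy]
        push_cast
        rw [div_mul_cancel₀ _ (by positivity), div_mul_cancel₀ _ (by positivity),
          Real.rpow_natCast, Real.rpow_one]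
    _ ≤ ((n * x + y) / (n + 1)) ^ (n + 1) :=
        pow_le_pow_left₀ (by positivity) (hgm.trans_eq (by ring)) _

lemma pow_pred_mul_le_of_add_eq_one {d : ℕ} (hd : d ≠ 0) {a b : ℝ} (ha : 0 ≤ a) (hb : 0 ≤ b)
    (hab : a + b = 1) : a ^ (d - 1) * b ≤ (1 - 1 / d) ^ (d - 1) / d := by
  obtain ⟨n, rfl⟩ := Nat.exists_eq_add_one_of_ne_zero hd
  rcases n.eq_zero_or_pos with rfl | hn
  · simp
    linarith
  have hn' : (n : ℝ) ≠ 0 := by positivity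
  have hamgm := pow_mul_le_arith_mean_pow n (div_nonneg ha n.cast_nonneg) hb
  rw [mul_div_cancel₀ _ hn', hab] at hamgm
  have hsub : 1 - 1 / ((n : ℝ) + 1) = n / (n + 1) := by field_simp; ring
  push_cast
  rw [hsub]
  calc a ^ n * b = n ^ n * ((a / n) ^ n * b) := by rw [div_pow]; field_simp
    _ ≤ n ^ n * (1 / (n + 1)) ^ (n + 1) := by gcongr
    _ = (n / (n + 1)) ^ n / (n + 1) := by rw [div_pow, div_pow, pow_succ]; field_simp; ring

lemma one_sub_one_div_natCast_nonneg (d : ℕ) : 0 ≤ 1 - 1 / (d : ℝ) :=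
  sub_nonneg.2 (by simpa using Nat.cast_inv_le_one d)

lemma isGreatest_abs_mul_pow_mul_on_circle {d : ℕ} (hd : d ≠ 0) :
    IsGreatest {z : ℝ | ∃ w : Fin 2 → ℝ, w 0 ^ 2 + w 1 ^ 2 = 1 ∧ z = |d * (w 0 ^ (d - 1) * w 1)|}
      √(d * (1 - 1 / d) ^ (d - 1)) := by
  have hc := one_sub_one_div_natCast_nonneg d
  constructor
  · refine ⟨![√(1 - 1 / d), √(1 / d)], ?_, ?_⟩
    · simp only [Matrix.cons_val_zero, Matrix.cons_val_one]
      rw [Real.sq_sqrt hc, Real.sq_sqrt (by positivity), sub_add_cancel]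
    · simp only [Matrix.cons_val_zero, Matrix.cons_val_one]
      rw [abs_of_nonneg (by positivity), Real.sqrt_eq_iff_eq_sq (by positivity) (by positivity),
        mul_pow, mul_pow, ← pow_mul, mul_comm (d - 1), pow_mul, Real.sq_sqrt hc,
        Real.sq_sqrt (by positivity)]
      field_simp
  · rintro z ⟨w, hw, rfl⟩
    refine Real.abs_le_sqrt ?_
    have hamgm := pow_pred_mul_le_of_add_eq_one hd (sq_nonneg (w 0)) (sq_nonneg (w 1)) hw
    calc ((d : ℝ) * (w 0 ^ (d - 1) * w 1)) ^ 2
        = (d : ℝ) ^ 2 * ((w 0 ^ 2) ^ (d - 1) * w 1 ^ 2) := by ring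
      _ ≤ (d : ℝ) ^ 2 * ((1 - 1 / d) ^ (d - 1) / d) := by gcongr
      _ = d * (1 - 1 / d) ^ (d - 1) := by field_simp

theorem Wd_norms (d : ℕ) (hd : 3 ≤ d) :
    (∑ i : Fin d → Fin 2, Wd d i ^ 2 = d) ∧
    (sSup {z : ℝ | ∃ w : Fin 2 → ℝ, w 0 ^ 2 + w 1 ^ 2 = 1 ∧
        z = |∑ i : Fin d → Fin 2, Wd d i * ∏ k : Fin d, w (i k)|}) ^ 2 /
      (∑ i : Fin d → Fin 2, Wd d i ^ 2) = (1 - 1 / (d : ℝ)) ^ (d - 1) := by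
  have hmax := isGreatest_abs_mul_pow_mul_on_circle (show d ≠ 0 by omega)
  have hc := one_sub_one_div_natCast_nonneg d
  refine ⟨sum_Wd_sq d, ?_⟩
  simp only [sum_Wd_mul_prod]
  rw [hmax.csSup_eq, sum_Wd_sq, Real.sq_sqrt (by positivity),
    mul_div_cancel_left₀ _ (by positivity)]
end
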